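/- arXiv:1510.00657 — 9 statements merged into one kernel-verified Lean document; each statement's English description precedes it below -/
import Mathlib

section
/- For every positive integer m, the noncommutative elementary and complete homogeneous symmetric functions satisfy the identity h_m(u) - h_{m-1}(u)e_1(u) + h_{m-2}(u)e_2(u) - ... + (-1)^m e_m(u) = 0 in the free associative ring Z⟨u_1,...,u_N⟩. -/
/-!
Write `H(t) = ∑ h_ℓ t^ℓ` and `E(-t) = ∑ (-1)^k e_k t^k` for the power series built from the
variables in a finite set `S`. Adjoining a variable `a` larger than every element of `S` gives
`E_{S ∪ {a}}(-t) = (1 - u_a t) E_S(-t)` (in a decreasing word `u_a` comes first) and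
`H_{S ∪ {a}}(t) (1 - u_a t) = H_S(t)` (in a weakly increasing word the copies of `u_a` come last).
Hence `H(t) E(-t)` does not change as variables are added one at a time in increasing order,
so it equals its value `1` for `S = ∅`, and the identity is the vanishing of its coefficient
of `t^m`.
-/

/-- Noncommutative elementary symmetric function `e_k(u)` (over all of `{1,…,N}`). -/
noncomputable def ncElem (N : ℕ) (k : ℤ) (S : Finset (Fin N)) : FreeAlgebra ℤ (Fin N) :=
  if k < 0 then 0 else
  ∑ T ∈ S.powersetCard k.toNat, (((T.sort (· ≤ ·)).reverse).map (FreeAlgebra.ι ℤ)).prod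

/-- Noncommutative complete homogeneous symmetric function `h_ℓ(u)`:
the sum over weakly increasing sequences `i_1 ≤ ⋯ ≤ i_ℓ` in `{1,…,N}`
of `u_{i_1} ⋯ u_{i_ℓ}`. -/
noncomputable def ncComplete (N : ℕ) (l : ℕ) : FreeAlgebra ℤ (Fin N) :=
  ∑ f ∈ Finset.univ.filter (fun f : Fin l → Fin N => ∀ i j : Fin l, i ≤ j → f i ≤ f j),
    ((List.ofFn f).map (FreeAlgebra.ι ℤ)).prod

open Finset PowerSeries

theorem Finset.sum_powersetCard_succ_insert {α M : Type*} [DecidableEq α] [AddCommMonoid M]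
    {a : α} {s : Finset α} (ha : a ∉ s) (n : ℕ) (f : Finset α → M) :
    ∑ t ∈ (insert a s).powersetCard (n + 1), f t =
      ∑ t ∈ s.powersetCard (n + 1), f t + ∑ t ∈ s.powersetCard n, f (insert a t) := by
  rw [powersetCard_succ_insert ha, sum_union, sum_image]
  · exact insert_erase_invOn.2.injOn.mono fun t ht ↦ notMem_mono (mem_powersetCard.1 ht).1 ha
  · aesop (add simp [disjoint_left, insert_subset_iff, mem_powersetCard])

theorem Finset.reverse_sort_le {α : Type*} [LinearOrder α] (s : Finset α) :
    (s.sort (· ≤ ·)).reverse = s.sort (· ≥ ·) :=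
  List.Perm.eq_of_pairwise' (List.pairwise_reverse.2 (s.pairwise_sort _)) (s.pairwise_sort _)
    ((List.reverse_perm _).trans ((s.sort_perm_toList _).trans (s.sort_perm_toList _).symm))

theorem Fin.monotone_snoc {α : Type*} [Preorder α] {n : ℕ} {f : Fin n → α} {a : α}
    (hf : Monotone f) (ha : ∀ i, f i ≤ a) : Monotone (Fin.snoc f a : Fin (n + 1) → α) := by
  intro i j hij
  rcases Fin.eq_castSucc_or_eq_last j with ⟨j, rfl⟩ | rfl
  · obtain ⟨i, rfl⟩ :=
      Fin.exists_castSucc_eq.2 (lt_of_le_of_lt hij (Fin.castSucc_lt_last j)).ne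
    simpa using hf (Fin.castSucc_le_castSucc_iff.1 hij)
  · rcases Fin.eq_castSucc_or_eq_last i with ⟨i, rfl⟩ | rfl <;> simp [ha]

section Elementary

variable {α A : Type*} [LinearOrder α] [Semiring A] (x : α → A)

def elemSym (S : Finset α) (k : ℕ) : A :=
  ∑ T ∈ S.powersetCard k, (((T.sort (· ≤ ·)).reverse).map x).prod

@[simp] theorem elemSym_zero (S : Finset α) : elemSym x S 0 = 1 := by
  simp [elemSym]

@[simp] theorem elemSym_empty_succ (k : ℕ) : elemSym x ∅ (k + 1) = 0 := by
  rw [elemSym, powersetCard_eq_empty.2 (by simp), sum_empty]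

theorem elemSym_insert_of_forall_lt {a : α} {S : Finset α} (h : ∀ b ∈ S, b < a) (k : ℕ) :
    elemSym x (insert a S) (k + 1) = x a * elemSym x S k + elemSym x S (k + 1) := by
  have ha : a ∉ S := fun haS => lt_irrefl a (h a haS)
  rw [elemSym, sum_powersetCard_succ_insert ha, add_comm, elemSym, elemSym, mul_sum]
  congr 1
  refine sum_congr rfl fun T hT => ?_
  have hTS := (mem_powersetCard.1 hT).1
  rw [reverse_sort_le, reverse_sort_le,
    sort_insert _ (fun b hb => (h b (hTS hb)).le) (fun haT => ha (hTS haT)),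
    List.map_cons, List.prod_cons]

end Elementary

section Complete

variable {α A : Type*} [LinearOrder α] [Fintype α]

open Classical in
def monotoneTuples (S : Finset α) (l : ℕ) : Finset (Fin l → α) :=
  univ.filter fun f => Monotone f ∧ ∀ i, f i ∈ S

theorem mem_monotoneTuples {S : Finset α} {l : ℕ} {f : Fin l → α} :
    f ∈ monotoneTuples S l ↔ Monotone f ∧ ∀ i, f i ∈ S := by
  simp [monotoneTuples]

theorem filter_last_ne_monotoneTuples {a : α} {S : Finset α} (h : ∀ b ∈ S, b < a) (l : ℕ) :
    (monotoneTuples (insert a S) (l + 1)).filter (fun f => f (Fin.last l) ≠ a) =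
      monotoneTuples S (l + 1) := by
  ext f
  simp only [mem_filter, mem_monotoneTuples]
  refine ⟨fun ⟨⟨hf, hS⟩, hl⟩ => ⟨hf, fun i => ?_⟩,
    fun ⟨hf, hS⟩ => ⟨⟨hf, fun i => mem_insert_of_mem (hS i)⟩, fun hl => ?_⟩⟩
  · have hlS : f (Fin.last l) ∈ S := (mem_insert.1 (hS _)).resolve_left hl
    exact (mem_insert.1 (hS i)).resolve_left ((hf (Fin.le_last i)).trans_lt (h _ hlS)).ne
  · exact lt_irrefl a (h a (hl ▸ hS _))

theorem filter_last_eq_monotoneTuples {a : α} {S : Finset α} (h : ∀ b ∈ S, b < a) (l : ℕ) :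
    (monotoneTuples (insert a S) (l + 1)).filter (fun f => f (Fin.last l) = a) =
      (monotoneTuples (insert a S) l).image (Fin.snoc · a) := by
  ext f
  simp only [mem_filter, mem_image, mem_monotoneTuples]
  constructor
  · rintro ⟨⟨hf, hS⟩, hl⟩
    exact ⟨Fin.init f, ⟨hf.comp Fin.strictMono_castSucc.monotone, fun i => hS _⟩,
      by rw [← hl, Fin.snoc_init_self]⟩
  · rintro ⟨g, ⟨hg, hS⟩, rfl⟩
    have hga : ∀ i, g i ≤ a := fun i => (mem_insert.1 (hS i)).elim le_of_eq fun hi => (h _ hi).le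
    refine ⟨⟨Fin.monotone_snoc hg hga, fun i => ?_⟩, Fin.snoc_last _ _⟩
    rcases Fin.eq_castSucc_or_eq_last i with ⟨i, rfl⟩ | rfl <;> simp [hS]

variable [Semiring A] (x : α → A)

def completeSym (S : Finset α) (l : ℕ) : A :=
  ∑ f ∈ monotoneTuples S l, ((List.ofFn f).map x).prod

@[simp] theorem completeSym_zero (S : Finset α) : completeSym x S 0 = 1 := by
  simp [completeSym, monotoneTuples, Subsingleton.monotone]

@[simp] theorem completeSym_empty_succ (l : ℕ) : completeSym x ∅ (l + 1) = 0 := by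
  simp [completeSym, monotoneTuples]

theorem completeSym_insert_of_forall_lt {a : α} {S : Finset α} (h : ∀ b ∈ S, b < a) (l : ℕ) :
    completeSym x (insert a S) (l + 1) =
      completeSym x S (l + 1) + completeSym x (insert a S) l * x a := by
  rw [completeSym, ← sum_filter_not_add_sum_filter _ (fun f => f (Fin.last l) = a),
    filter_last_ne_monotoneTuples h, filter_last_eq_monotoneTuples h,
    sum_image (Fin.snoc_left_injective (α := fun _ => α) a).injOn, completeSym, completeSym,
    sum_mul]
  congr 1
  refine sum_congr rfl fun g _ => ?_
  simp only [List.ofFn_succ', Fin.snoc_castSucc, Fin.snoc_last, List.concat_eq_append,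
    List.map_append, List.prod_append, List.map_singleton, List.prod_singleton]

end Complete

section GeneratingSeries

variable {α A : Type*} [LinearOrder α] [Ring A] (x : α → A)

def alternatingElemSeries (S : Finset α) : A⟦X⟧ :=
  PowerSeries.mk fun k => (-1 : ℤ) ^ k • elemSym x S k

theorem alternatingElemSeries_empty : alternatingElemSeries x ∅ = 1 := by
  ext (_ | n) <;> simp [alternatingElemSeries]

theorem alternatingElemSeries_insert {a : α} {S : Finset α} (h : ∀ b ∈ S, b < a) :
    alternatingElemSeries x (insert a S) = (1 - X * C (x a)) * alternatingElemSeries x S := by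
  ext (_ | n)
  · simp [alternatingElemSeries]
  · simp only [alternatingElemSeries, coeff_mk, sub_mul, one_mul, mul_assoc, map_sub,
      coeff_succ_X_mul, coeff_C_mul, elemSym_insert_of_forall_lt x h, pow_succ, mul_neg_one,
      neg_smul, mul_smul_comm, smul_add]
    abel

variable [Fintype α]

def completeSeries (S : Finset α) : A⟦X⟧ :=
  PowerSeries.mk (completeSym x S)

theorem completeSeries_empty : completeSeries x ∅ = 1 := by
  ext (_ | n) <;> simp [completeSeries]

theorem completeSeries_insert_mul {a : α} {S : Finset α} (h : ∀ b ∈ S, b < a) :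
    completeSeries x (insert a S) * (1 - X * C (x a)) = completeSeries x S := by
  ext (_ | n) <;>
    simp [completeSeries, mul_sub, ← mul_assoc, completeSym_insert_of_forall_lt x h]

theorem completeSeries_mul_alternatingElemSeries (S : Finset α) :
    completeSeries x S * alternatingElemSeries x S = 1 := by
  induction S using Finset.induction_on_max with
  | empty => rw [completeSeries_empty, alternatingElemSeries_empty, one_mul]
  | insert a S h ih =>
    rw [alternatingElemSeries_insert x h, ← mul_assoc, completeSeries_insert_mul x h, ih]

theorem sum_range_neg_one_pow_smul_completeSym_mul_elemSym (S : Finset α) {m : ℕ} (hm : m ≠ 0) :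
    ∑ k ∈ range (m + 1), (-1 : ℤ) ^ k • (completeSym x S (m - k) * elemSym x S k) = 0 := by
  have hcoeff := congrArg (coeff m) (completeSeries_mul_alternatingElemSeries x S)
  rw [coeff_mul, coeff_one, if_neg hm, ← Nat.sum_antidiagonal_swap] at hcoeff
  simp only [Prod.fst_swap, Prod.snd_swap] at hcoeff
  rw [Nat.sum_antidiagonal_eq_sum_range_succ
      (fun i j => coeff j (completeSeries x S) * coeff i (alternatingElemSeries x S))] at hcoeff
  simpa only [completeSeries, alternatingElemSeries, coeff_mk, mul_smul_comm] using hcoeff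

end GeneratingSeries

theorem ncElem_natCast_eq_elemSym (N k : ℕ) (S : Finset (Fin N)) :
    ncElem N k S = elemSym (FreeAlgebra.ι ℤ) S k := by
  rw [ncElem, if_neg (by omega), Int.toNat_natCast, elemSym]

theorem ncComplete_eq_completeSym (N l : ℕ) :
    ncComplete N l = completeSym (FreeAlgebra.ι ℤ) univ l := by
  refine sum_congr (filter_congr fun f _ => ?_) fun _ _ => rfl
  simp [Monotone]

/-- `h_m - h_{m-1} e_1 + h_{m-2} e_2 - ⋯ + (-1)^m e_m = 0` for every `m > 0`. -/
theorem stmt2 (N : ℕ) (m : ℕ) (hm : 0 < m) :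
    ∑ k ∈ Finset.range (m + 1),
        ((-1 : ℤ) ^ k) • (ncComplete N (m - k) * ncElem N (k : ℤ) Finset.univ) = 0 := by
  simp only [ncComplete_eq_completeSym, ncElem_natCast_eq_elemSym]
  exact sum_range_neg_one_pow_smul_completeSym_mul_elemSym _ _ hm.ne'
end

section
/- Let I be a two-sided ideal of U = Z⟨u_1,...,u_N⟩ such that all noncommutative elementary symmetric functions e_k(u) pairwise commute modulo I. Then all noncommutative complete homogeneous symmetric functions h_ℓ(u) pairwise commute modulo I. -/
/-!
Expanding `h_p e_q` gives the sum of the words of length `p + q` that weakly increase on their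
first `p` letters and strictly decrease on the remaining ones. For a fixed word of length `m > 0`
the admissible split points `p` come in adjacent pairs, hence `∑ₚ (-1)^(m-p) h_p e_(m-p) = 0`.
This recursion puts every `h_m` in the subring generated by the `e_k`, and modulo `I` that subring
is commutative.
-/

open Finset

theorem Subring.commute_of_mem_closure {R : Type*} [Ring R] {s : Set R}
    (hs : ∀ x ∈ s, ∀ y ∈ s, Commute x y) {x y : R} (hx : x ∈ closure s) (hy : y ∈ closure s) :
    Commute x y :=
  Set.centralizer_centralizer_comm_of_comm hs x (closure_le_centralizer_centralizer s hx) y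
    (closure_le_centralizer_centralizer s hy)

theorem TwoSidedIdeal.commute_mk'_iff {R : Type*} [Ring R] (I : TwoSidedIdeal R) (x y : R) :
    Commute (I.ringCon.mk' x) (I.ringCon.mk' y) ↔ x * y - y * x ∈ I := by
  rw [commute_iff_eq, ← map_mul, ← map_mul, ← I.rel_iff]
  exact RingCon.eq _

section Recursion

variable {R : Type*} [Ring R] {e h : ℕ → R}

theorem mem_closure_range_of_sum_mul_eq_zero (h_zero : h 0 = 1) (e_zero : e 0 = 1)
    (hrec : ∀ m, 0 < m → ∑ p ∈ range (m + 1), (-1 : ℤ) ^ (m - p) • (h p * e (m - p)) = 0)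
    (m : ℕ) : h m ∈ Subring.closure (Set.range e) := by
  induction m using Nat.strong_induction_on with
  | _ m ih =>
    rcases Nat.eq_zero_or_pos m with rfl | hm
    · exact h_zero ▸ Subring.one_mem _
    have hm_eq : h m = -∑ p ∈ range m, (-1 : ℤ) ^ (m - p) • (h p * e (m - p)) := by
      have := hrec m hm
      rwa [sum_range_succ, Nat.sub_self, e_zero, pow_zero, one_smul, mul_one, add_comm,
        add_eq_zero_iff_eq_neg] at this
    rw [hm_eq]
    refine neg_mem (sum_mem fun p hp => zsmul_mem (mul_mem (ih p (mem_range.mp hp)) ?_) _)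
    exact Subring.subset_closure ⟨m - p, rfl⟩

theorem commute_of_sum_mul_eq_zero (he : ∀ k l, Commute (e k) (e l)) (h_zero : h 0 = 1)
    (e_zero : e 0 = 1)
    (hrec : ∀ m, 0 < m → ∑ p ∈ range (m + 1), (-1 : ℤ) ^ (m - p) • (h p * e (m - p)) = 0)
    (k l : ℕ) : Commute (h k) (h l) :=
  Subring.commute_of_mem_closure (by rintro _ ⟨a, rfl⟩ _ ⟨b, rfl⟩; exact he a b)
    (mem_closure_range_of_sum_mul_eq_zero h_zero e_zero hrec k)
    (mem_closure_range_of_sum_mul_eq_zero h_zero e_zero hrec l)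

end Recursion

section IncDecAt

variable {α : Type*} [LinearOrder α] {m : ℕ}

def IncDecAt (w : Fin m → α) (p : ℕ) : Prop :=
  MonotoneOn w {i | (i : ℕ) < p} ∧ StrictAntiOn w {i | p ≤ (i : ℕ)}

variable {w : Fin m → α} {p : ℕ}

theorem IncDecAt.succ (hw : IncDecAt w p)
    (hle : ∀ i j : Fin m, (i : ℕ) + 1 = p → (j : ℕ) = p → w i ≤ w j) : IncDecAt w (p + 1) := by
  refine ⟨fun i hi j hj hij => ?_,
    hw.2.mono fun i (hi : p + 1 ≤ (i : ℕ)) => show p ≤ (i : ℕ) by omega⟩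
  change (i : ℕ) < p + 1 at hi
  change (j : ℕ) < p + 1 at hj
  rcases Nat.lt_succ_iff_lt_or_eq.mp hj with hj | hj
  · exact hw.1 (show (i : ℕ) < p by omega) hj hij
  rcases hij.lt_or_eq with hij | rfl
  · let k : Fin m := ⟨p - 1, by omega⟩
    calc w i ≤ w k := hw.1 (show (i : ℕ) < p by omega) (show p - 1 < p by omega)
          (Fin.mk_le_mk.mpr (by omega))
      _ ≤ w j := hle k j (by simp [k]; omega) hj
  · exact le_rfl

theorem IncDecAt.of_succ (hw : IncDecAt w (p + 1))
    (hlt : ∀ i j : Fin m, (i : ℕ) = p → (j : ℕ) = p + 1 → w j < w i) : IncDecAt w p := by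
  refine ⟨hw.1.mono fun i (hi : (i : ℕ) < p) => show (i : ℕ) < p + 1 by omega,
    fun i hi j hj hij => ?_⟩
  change p ≤ (i : ℕ) at hi
  change p ≤ (j : ℕ) at hj
  rcases Nat.lt_or_eq_of_le hi with hi | hi
  · exact hw.2 hi (show p + 1 ≤ (j : ℕ) by omega) hij
  have hij : (i : ℕ) < j := hij
  rcases Nat.lt_or_eq_of_le (show p + 1 ≤ (j : ℕ) by omega) with hj | hj
  · let k : Fin m := ⟨p + 1, by omega⟩
    calc w j < w k := hw.2 (show p + 1 ≤ p + 1 from le_rfl) (show p + 1 ≤ (j : ℕ) by omega)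
          (Fin.mk_lt_mk.mpr hj)
      _ < w i := hlt i k hi.symm rfl
  · exact hlt i j hi.symm hj.symm

theorem IncDecAt.not_add_two (hw : IncDecAt w p) (hp : p + 2 ≤ m) : ¬ IncDecAt w (p + 2) := by
  intro hw₂
  let i : Fin m := ⟨p, by omega⟩
  let j : Fin m := ⟨p + 1, by omega⟩
  have hij : i < j := Fin.mk_lt_mk.mpr (by omega)
  exact (hw.2 (show p ≤ p from le_rfl) (show p ≤ p + 1 by omega) hij).not_ge
    (hw₂.1 (show p < p + 2 by omega) (show p + 1 < p + 2 by omega) hij.le)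

theorem IncDecAt.succ_or_pred (hw : IncDecAt w p) (hpm : p ≤ m) (hm : 0 < m) :
    p < m ∧ IncDecAt w (p + 1) ∨ 0 < p ∧ IncDecAt w (p - 1) := by
  rcases hpm.lt_or_eq with hpm | rfl
  · by_cases hle : ∀ i j : Fin m, (i : ℕ) + 1 = p → (j : ℕ) = p → w i ≤ w j
    · exact .inl ⟨hpm, hw.succ hle⟩
    push Not at hle
    obtain ⟨i, j, hi, hj, hji⟩ := hle
    refine .inr ⟨by omega, IncDecAt.of_succ (by rwa [Nat.sub_add_cancel (by omega)]) ?_⟩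
    intro i' j' hi' hj'
    rwa [Fin.ext (hi'.trans (by omega) : (i' : ℕ) = i),
      Fin.ext (hj'.trans (by omega) : (j' : ℕ) = j)]
  · refine .inr ⟨hm, IncDecAt.of_succ (by rwa [Nat.sub_add_cancel hm]) ?_⟩
    intro i j _ hj
    omega

open scoped Classical in
theorem sum_neg_one_pow_filter_incDecAt (w : Fin m → α) (hm : 0 < m) :
    ∑ p ∈ (range (m + 1)).filter (IncDecAt w), (-1 : ℤ) ^ (m - p) = 0 := by
  set P := (range (m + 1)).filter (IncDecAt w)
  set partner := fun p => if p < m ∧ IncDecAt w (p + 1) then p + 1 else p - 1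
  have hle : ∀ p ∈ P, p ≤ m := fun p hp => by
    simp only [P, mem_filter, mem_range] at hp; omega
  have hpartner : ∀ p ∈ P,
      (partner p = p + 1 ∨ partner p + 1 = p) ∧ partner p ∈ P ∧ partner (partner p) = p := by
    intro p hp
    simp only [P, mem_filter, mem_range] at hp ⊢
    by_cases hup : p < m ∧ IncDecAt w (p + 1)
    · have hdown : ¬ (p + 1 < m ∧ IncDecAt w (p + 1 + 1)) :=
        fun h => hp.2.not_add_two (by omega) h.2
      dsimp only [partner]
      rw [if_pos hup, if_neg hdown]
      exact ⟨.inl rfl, ⟨by omega, hup.2⟩, rfl⟩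
    · obtain ⟨hp0, hdown⟩ := (hp.2.succ_or_pred (by omega) hm).resolve_left hup
      have hup' : p - 1 < m ∧ IncDecAt w (p - 1 + 1) :=
        ⟨by omega, by rw [Nat.sub_add_cancel hp0]; exact hp.2⟩
      dsimp only [partner]
      rw [if_neg hup, if_pos hup']
      exact ⟨.inr (by omega), ⟨by omega, hdown⟩, by omega⟩
  refine sum_involution (fun p _ => partner p) (fun p hp => ?_) (fun p hp _ => ?_)
    (fun p hp => (hpartner p hp).2.1) (fun p hp => (hpartner p hp).2.2)
  · obtain ⟨hadj, hmem, -⟩ := hpartner p hp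
    have hq := hle _ hmem
    have hp' := hle p hp
    generalize partner p = q at hadj hq ⊢
    rcases hadj with rfl | rfl
    · rw [show m - p = m - (p + 1) + 1 by omega, pow_succ]; ring
    · rw [show m - q = m - (q + 1) + 1 by omega, pow_succ]; ring
  · rcases (hpartner p hp).1 with h | h <;> omega

theorem incDecAt_append_iff {p q : ℕ} {f : Fin p → α} {g : Fin q → α} :
    IncDecAt (Fin.append f g) p ↔ Monotone f ∧ StrictAnti g := by
  refine ⟨fun h => ⟨fun a b hab => ?_, fun a b hab => ?_⟩, fun ⟨hf, hg⟩ => ⟨?_, ?_⟩⟩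
  · simpa using h.1 (by simp) (by simp) ((Fin.strictMono_castAdd q).monotone hab)
  · simpa using h.2 (by simp) (by simp) (Fin.strictMono_natAdd p hab)
  · intro i hi j hj hij
    induction i using Fin.addCases with
    | right a => simp at hi
    | left a =>
      induction j using Fin.addCases with
      | right b => simp at hj
      | left b => simpa using hf ((Fin.strictMono_castAdd q).le_iff_le.mp hij)
  · intro i hi j hj hij
    induction i using Fin.addCases with
    | left a => simp at hi; omega
    | right a =>
      induction j using Fin.addCases with
      | left b => simp at hj; omega
      | right b => simpa using hg ((Fin.strictMono_natAdd p).lt_iff_lt.mp hij)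

end IncDecAt

theorem List.ofFn_comp_rev {α : Type*} {k : ℕ} (f : Fin k → α) :
    List.ofFn (f ∘ Fin.rev) = (List.ofFn f).reverse := by
  rw [List.ofFn_eq_map, List.ofFn_eq_map, ← List.map_reverse, List.finRange_reverse, List.map_map]

theorem Finset.image_univ_comp_rev {β : Type*} [DecidableEq β] {k : ℕ} (f : Fin k → β) :
    univ.image (f ∘ Fin.rev) = univ.image f := by
  rw [← image_image, image_univ_of_surjective Fin.rev_surjective]

theorem Finset.sort_image_univ_of_strictMono {α : Type*} [LinearOrder α] {k : ℕ} {f : Fin k → α}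
    (hf : StrictMono f) : (univ.image f).sort (· ≤ ·) = List.ofFn f := by
  have hc : (univ.image f).card = k := by simp [card_image_of_injective _ hf.injective]
  rw [← listMap_orderEmbOfFin_finRange _ hc,
    ← orderEmbOfFin_unique hc (fun x => mem_image_of_mem f (mem_univ x)) hf, List.ofFn_eq_map]

noncomputable def ncWord {R X : Type*} [CommSemiring R] {m : ℕ} (w : Fin m → X) :
    FreeAlgebra R X :=
  ((List.ofFn w).map (FreeAlgebra.ι R)).prod

theorem ncWord_append {R X : Type*} [CommSemiring R] {p q : ℕ} (f : Fin p → X) (g : Fin q → X) :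
    ncWord (R := R) (Fin.append f g) = ncWord f * ncWord g := by
  rw [ncWord, List.ofFn_fin_append, List.map_append, List.prod_append, ncWord, ncWord]

open scoped Classical in
theorem ncElem_univ_eq_sum (N k : ℕ) :
    ncElem N k univ = ∑ f ∈ univ.filter (fun f : Fin k → Fin N => StrictAnti f), ncWord f := by
  rw [ncElem, if_neg (by omega), Int.toNat_natCast]
  symm
  refine sum_bij' (fun f _ => univ.image f)
    (fun T hT j => T.orderEmbOfFin (mem_powersetCard.mp hT).2 j.rev) (fun f hf => ?_)
    (fun T hT => ?_) (fun f hf => ?_) (fun T hT => ?_) (fun f hf => ?_)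
  · simp only [mem_filter, mem_univ, true_and] at hf
    simp [mem_powersetCard, card_image_of_injective _ hf.injective]
  · simp only [mem_filter, mem_univ, true_and]
    exact fun a b hab => (T.orderEmbOfFin _).strictMono (Fin.rev_lt_rev.mpr hab)
  · simp only [mem_filter, mem_univ, true_and] at hf
    have hc : (univ.image f).card = k := by simp [card_image_of_injective _ hf.injective]
    have := orderEmbOfFin_unique hc (fun x => mem_image_of_mem f (mem_univ _))
      (f := f ∘ Fin.rev) (fun a b hab => hf (Fin.rev_lt_rev.mpr hab))
    funext j
    simp [← this]
  · exact (image_univ_comp_rev (T.orderEmbOfFin _)).trans (image_orderEmbOfFin_univ _ _)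
  · simp only [mem_filter, mem_univ, true_and] at hf
    rw [← image_univ_comp_rev, sort_image_univ_of_strictMono (f := f ∘ Fin.rev)
      (fun a b hab => hf (Fin.rev_lt_rev.mpr hab)), List.ofFn_comp_rev, List.reverse_reverse, ncWord]

open scoped Classical in
theorem ncComplete_mul_ncElem (N p q : ℕ) :
    ncComplete N p * ncElem N q univ
      = ∑ w ∈ univ.filter (fun w : Fin (p + q) → Fin N => IncDecAt w p), ncWord w := by
  rw [ncElem_univ_eq_sum, ncComplete, sum_mul_sum, ← sum_product']
  refine sum_equiv (Fin.appendEquiv p q) (fun fg => ?_) (fun fg _ => (ncWord_append _ _).symm)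
  simp only [mem_product, mem_filter, mem_univ, true_and]
  exact incDecAt_append_iff.symm

theorem sum_neg_one_pow_smul_ncComplete_mul_ncElem (N m : ℕ) (hm : 0 < m) :
    ∑ p ∈ range (m + 1), (-1 : ℤ) ^ (m - p) • (ncComplete N p * ncElem N ↑(m - p) univ) = 0 := by
  classical
  calc _ = ∑ p ∈ range (m + 1), ∑ w : Fin m → Fin N,
        if IncDecAt w p then (-1 : ℤ) ^ (m - p) • ncWord (R := ℤ) w else 0 := by
        refine sum_congr rfl fun p hp => ?_
        obtain ⟨q, rfl⟩ := Nat.exists_eq_add_of_le (Nat.lt_succ_iff.mp (mem_range.mp hp))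
        rw [Nat.add_sub_cancel_left, ncComplete_mul_ncElem, smul_sum, sum_filter]
    _ = ∑ w : Fin m → Fin N,
        (∑ p ∈ (range (m + 1)).filter (IncDecAt w), (-1 : ℤ) ^ (m - p)) • ncWord (R := ℤ) w := by
        rw [sum_comm]
        simp only [sum_filter, sum_smul, ite_smul, zero_smul]
    _ = 0 := by simp only [sum_neg_one_pow_filter_incDecAt _ hm, zero_smul, sum_const_zero]

theorem ncElem_zero (N : ℕ) : ncElem N 0 univ = 1 := by
  simp [ncElem]

theorem ncComplete_zero (N : ℕ) : ncComplete N 0 = 1 := by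
  simp [ncComplete]

/-- If all the `e_k(u)` pairwise commute modulo a two-sided ideal `I`, then all
the `h_ℓ(u)` pairwise commute modulo `I`. -/
theorem stmt3 (N : ℕ) (I : TwoSidedIdeal (FreeAlgebra ℤ (Fin N)))
    (he : ∀ k l : ℕ, ncElem N k Finset.univ * ncElem N l Finset.univ
        - ncElem N l Finset.univ * ncElem N k Finset.univ ∈ I) :
    ∀ k l : ℕ, ncComplete N k * ncComplete N l - ncComplete N l * ncComplete N k ∈ I := by
  intro k l
  rw [← I.commute_mk'_iff]
  refine commute_of_sum_mul_eq_zero (e := fun k => I.ringCon.mk' (ncElem N k univ))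
    (h := fun l => I.ringCon.mk' (ncComplete N l))
    (fun a b => (I.commute_mk'_iff _ _).mpr (he a b)) ?_ ?_ (fun m hm => ?_) k l
  · rw [ncComplete_zero, map_one]
  · rw [Nat.cast_zero, ncElem_zero, map_one]
  · simpa using congrArg I.ringCon.mk' (sum_neg_one_pow_smul_ncComplete_mul_ncElem N m hm)
end

section
/- The ideal I_B of U = Z⟨u_1,...,u_N⟩ generated by the elements u_b²u_a + u_a u_b u_a - u_b u_a u_b - u_b u_a² (for a < b), u_b u_c u_a - u_b u_a u_c (for a < b < c), and u_a u_c u_b - u_c u_a u_b (for a < b < c) contains all elements u_c u_b u_c u_a + u_b u_c u_a u_c - u_c u_b u_a u_c - u_b u_c² u_a for a < b < c. -/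
open FreeAlgebra

/-- Generators of the ideal `I_B`. -/
def genB (N : ℕ) : Set (FreeAlgebra ℤ (Fin N)) :=
  {x | ∃ a b : Fin N, a < b ∧
      x = ι ℤ b * ι ℤ b * ι ℤ a + ι ℤ a * ι ℤ b * ι ℤ a
        - ι ℤ b * ι ℤ a * ι ℤ b - ι ℤ b * ι ℤ a * ι ℤ a} ∪
  {x | ∃ a b c : Fin N, a < b ∧ b < c ∧
      x = ι ℤ b * ι ℤ c * ι ℤ a - ι ℤ b * ι ℤ a * ι ℤ c} ∪
  {x | ∃ a b c : Fin N, a < b ∧ b < c ∧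
      x = ι ℤ a * ι ℤ c * ι ℤ b - ι ℤ c * ι ℤ a * ι ℤ b}

/- The degree-4 element is `u_c·r - u_b·s - r·u_a`, where `r = u_b u_c u_a - u_b u_a u_c` is a
generator for the triple `a < b < c` and `s` is the quadratic-type generator for the pair `a < c`. -/

namespace TwoSidedIdeal

variable {R : Type*} [Ring R] (I : TwoSidedIdeal R) {x y z : R}

theorem zyzx_add_yzxz_sub_zyxz_sub_yzzx_mem
    (hr : y * z * x - y * x * z ∈ I)
    (hs : z * z * x + x * z * x - z * x * z - z * x * x ∈ I) :
    z * y * z * x + y * z * x * z - z * y * x * z - y * z * z * x ∈ I := by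
  have key : z * y * z * x + y * z * x * z - z * y * x * z - y * z * z * x =
      z * (y * z * x - y * x * z) - y * (z * z * x + x * z * x - z * x * z - z * x * x)
        - (y * z * x - y * x * z) * x := by
    noncomm_ring
  rw [key]
  exact I.sub_mem (I.sub_mem (I.mul_mem_left _ _ hr) (I.mul_mem_left _ _ hs))
    (I.mul_mem_right _ _ hr)

end TwoSidedIdeal

/-- The ideal `I_B` contains the degree-4 elements
`u_c u_b u_c u_a + u_b u_c u_a u_c - u_c u_b u_a u_c - u_b u_c² u_a` for `a < b < c`. -/
theorem stmt4 (N : ℕ) (a b c : Fin N) (hab : a < b) (hbc : b < c) :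
    ι ℤ c * ι ℤ b * ι ℤ c * ι ℤ a + ι ℤ b * ι ℤ c * ι ℤ a * ι ℤ c
      - ι ℤ c * ι ℤ b * ι ℤ a * ι ℤ c - ι ℤ b * ι ℤ c * ι ℤ c * ι ℤ a
      ∈ TwoSidedIdeal.span (genB N) :=
  TwoSidedIdeal.zyzx_add_yzxz_sub_zyxz_sub_yzzx_mem _
    (TwoSidedIdeal.subset_span (Or.inl (Or.inr ⟨a, b, c, hab, hbc, rfl⟩)))
    (TwoSidedIdeal.subset_span (Or.inl (Or.inl ⟨a, c, hab.trans hbc, rfl⟩)))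
end

section
/- The switchboard ideal I_S contains the ideal I_C. Concretely: each of the generators of I_C, namely u_b²u_a + u_a u_b u_a - u_b u_a u_b - u_b u_a² (a < b), u_b u_c u_a + u_a u_c u_b - u_b u_a u_c - u_c u_a u_b (a < b < c), and u_c u_b u_c u_a + u_b u_c u_a u_c - u_c u_b u_a u_c - u_b u_c² u_a (a < b < c), lies in I_S. -/
open FreeAlgebra

/-- Generators of the switchboard ideal `I_S`. -/
def genS (N : ℕ) : Set (FreeAlgebra ℤ (Fin N)) :=
  {x | ∃ a b : Fin N, (b : ℕ) = (a : ℕ) + 1 ∧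
      x = ι ℤ b * ι ℤ b * ι ℤ a + ι ℤ a * ι ℤ b * ι ℤ a
        - ι ℤ b * ι ℤ a * ι ℤ b - ι ℤ b * ι ℤ a * ι ℤ a} ∪
  {x | ∃ a b : Fin N, (a : ℕ) + 2 ≤ (b : ℕ) ∧
      x = ι ℤ b * ι ℤ b * ι ℤ a - ι ℤ b * ι ℤ a * ι ℤ b} ∪
  {x | ∃ a b : Fin N, (a : ℕ) + 2 ≤ (b : ℕ) ∧
      x = ι ℤ b * ι ℤ a * ι ℤ a - ι ℤ a * ι ℤ b * ι ℤ a} ∪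
  {x | ∃ a b c : Fin N, a < b ∧ b < c ∧
      x = ι ℤ b * ι ℤ c * ι ℤ a + ι ℤ a * ι ℤ c * ι ℤ b
        - ι ℤ b * ι ℤ a * ι ℤ c - ι ℤ c * ι ℤ a * ι ℤ b}

/-- Generators of the ideal `I_C`. -/
def genC (N : ℕ) : Set (FreeAlgebra ℤ (Fin N)) :=
  {x | ∃ a b : Fin N, a < b ∧
      x = ι ℤ b * ι ℤ b * ι ℤ a + ι ℤ a * ι ℤ b * ι ℤ a
        - ι ℤ b * ι ℤ a * ι ℤ b - ι ℤ b * ι ℤ a * ι ℤ a} ∪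
  {x | ∃ a b c : Fin N, a < b ∧ b < c ∧
      x = ι ℤ b * ι ℤ c * ι ℤ a + ι ℤ a * ι ℤ c * ι ℤ b
        - ι ℤ b * ι ℤ a * ι ℤ c - ι ℤ c * ι ℤ a * ι ℤ b} ∪
  {x | ∃ a b c : Fin N, a < b ∧ b < c ∧
      x = ι ℤ c * ι ℤ b * ι ℤ c * ι ℤ a + ι ℤ b * ι ℤ c * ι ℤ a * ι ℤ c
        - ι ℤ c * ι ℤ b * ι ℤ a * ι ℤ c - ι ℤ b * ι ℤ c * ι ℤ c * ι ℤ a}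

/-!
The cubic generators of `I_C` are generators of `I_S`, and so is the quadratic one when
`b = a + 1`. When `b ≥ a + 2` the quadratic generator is the difference of the two
quadratic generators of `I_S` for the pair `(a, b)`. The quartic generator is
`u_c` times the cubic generator plus the commutator of `u_b` with the quadratic generator
`u_c² u_a - u_c u_a u_c` (here `c ≥ a + 2`).
-/

namespace TwoSidedIdeal

variable {R : Type*} [Ring R] (I : TwoSidedIdeal R) {x y z : R}

lemma quadratic_mem_of_mem (hy : y * y * x - y * x * y ∈ I) (hx : y * x * x - x * y * x ∈ I) :
    y * y * x + x * y * x - y * x * y - y * x * x ∈ I := by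
  have h : y * y * x + x * y * x - y * x * y - y * x * x
      = (y * y * x - y * x * y) - (y * x * x - x * y * x) := by noncomm_ring
  rw [h]
  exact I.sub_mem hy hx

lemma quartic_mem_of_mem (hcub : y * z * x + x * z * y - y * x * z - z * x * y ∈ I)
    (hz : z * z * x - z * x * z ∈ I) :
    z * y * z * x + y * z * x * z - z * y * x * z - y * z * z * x ∈ I := by
  have h : z * y * z * x + y * z * x * z - z * y * x * z - y * z * z * x
      = z * (y * z * x + x * z * y - y * x * z - z * x * y)
        + ((z * z * x - z * x * z) * y - y * (z * z * x - z * x * z)) := by noncomm_ring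
  rw [h]
  exact I.add_mem (I.mul_mem_left _ _ hcub)
    (I.sub_mem (I.mul_mem_right _ _ hz) (I.mul_mem_left _ _ hz))

end TwoSidedIdeal

section Switchboard

variable {N : ℕ}

lemma quadratic_mem_span_genS_of_val_eq_succ {a b : Fin N} (h : (b : ℕ) = (a : ℕ) + 1) :
    ι ℤ b * ι ℤ b * ι ℤ a + ι ℤ a * ι ℤ b * ι ℤ a - ι ℤ b * ι ℤ a * ι ℤ b - ι ℤ b * ι ℤ a * ι ℤ a
      ∈ TwoSidedIdeal.span (genS N) :=
  TwoSidedIdeal.subset_span (Or.inl (Or.inl (Or.inl ⟨a, b, h, rfl⟩)))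

lemma sq_mul_sub_mem_span_genS {a b : Fin N} (h : (a : ℕ) + 2 ≤ (b : ℕ)) :
    ι ℤ b * ι ℤ b * ι ℤ a - ι ℤ b * ι ℤ a * ι ℤ b ∈ TwoSidedIdeal.span (genS N) :=
  TwoSidedIdeal.subset_span (Or.inl (Or.inl (Or.inr ⟨a, b, h, rfl⟩)))

lemma mul_sq_sub_mem_span_genS {a b : Fin N} (h : (a : ℕ) + 2 ≤ (b : ℕ)) :
    ι ℤ b * ι ℤ a * ι ℤ a - ι ℤ a * ι ℤ b * ι ℤ a ∈ TwoSidedIdeal.span (genS N) :=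
  TwoSidedIdeal.subset_span (Or.inl (Or.inr ⟨a, b, h, rfl⟩))

lemma cubic_mem_span_genS {a b c : Fin N} (hab : a < b) (hbc : b < c) :
    ι ℤ b * ι ℤ c * ι ℤ a + ι ℤ a * ι ℤ c * ι ℤ b - ι ℤ b * ι ℤ a * ι ℤ c - ι ℤ c * ι ℤ a * ι ℤ b
      ∈ TwoSidedIdeal.span (genS N) :=
  TwoSidedIdeal.subset_span (Or.inr ⟨a, b, c, hab, hbc, rfl⟩)

lemma quadratic_mem_span_genS {a b : Fin N} (hab : a < b) :
    ι ℤ b * ι ℤ b * ι ℤ a + ι ℤ a * ι ℤ b * ι ℤ a - ι ℤ b * ι ℤ a * ι ℤ b - ι ℤ b * ι ℤ a * ι ℤ a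
      ∈ TwoSidedIdeal.span (genS N) := by
  rcases Nat.lt_or_ge ((a : ℕ) + 1) (b : ℕ) with hfar | hnear
  · exact (TwoSidedIdeal.span (genS N)).quadratic_mem_of_mem
      (sq_mul_sub_mem_span_genS hfar) (mul_sq_sub_mem_span_genS hfar)
  · exact quadratic_mem_span_genS_of_val_eq_succ (le_antisymm hnear (Fin.lt_def.mp hab))

lemma quartic_mem_span_genS {a b c : Fin N} (hab : a < b) (hbc : b < c) :
    ι ℤ c * ι ℤ b * ι ℤ c * ι ℤ a + ι ℤ b * ι ℤ c * ι ℤ a * ι ℤ c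
      - ι ℤ c * ι ℤ b * ι ℤ a * ι ℤ c - ι ℤ b * ι ℤ c * ι ℤ c * ι ℤ a
      ∈ TwoSidedIdeal.span (genS N) := by
  have hac : (a : ℕ) + 2 ≤ (c : ℕ) := by
    have := Fin.lt_def.mp hab
    have := Fin.lt_def.mp hbc
    omega
  exact (TwoSidedIdeal.span (genS N)).quartic_mem_of_mem
    (cubic_mem_span_genS hab hbc) (sq_mul_sub_mem_span_genS hac)

lemma genC_subset_span_genS : genC N ⊆ TwoSidedIdeal.span (genS N) := by
  rintro x ((⟨a, b, hab, rfl⟩ | ⟨a, b, c, hab, hbc, rfl⟩) | ⟨a, b, c, hab, hbc, rfl⟩)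
  · exact quadratic_mem_span_genS hab
  · exact cubic_mem_span_genS hab hbc
  · exact quartic_mem_span_genS hab hbc

end Switchboard

/-- The switchboard ideal `I_S` contains `I_C`: every generator of `I_C`
lies in `I_S`, hence `I_C ⊆ I_S`. -/
theorem stmt6 (N : ℕ) :
    (∀ x ∈ genC N, x ∈ TwoSidedIdeal.span (genS N)) ∧
    TwoSidedIdeal.span (genC N) ≤ TwoSidedIdeal.span (genS N) :=
  ⟨genC_subset_span_genS, TwoSidedIdeal.span_le.mpr genC_subset_span_genS⟩
end

section
/- Let v = v_1...v_s be a strictly decreasing word and w = w_1...w_t a strictly increasing word in the alphabet {1,...,N}, and let b satisfy v_1 < b < w_1. Then u_b u_v u_w ≡ u_b u_w u_v modulo the ideal I_B, where u_x denotes the monomial corresponding to word x. -/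
/-! In the quotient by `I_B`, the relations `u_b u_c u_a = u_b u_a u_c` (`a < b < c`) let a letter
above `b` jump over a letter below `b`, as long as `u_b` stands in front. As `v` decreases from
below `b`, a letter `c > b` therefore crosses `u_v` one letter at a time, the letter just crossed
taking over the role of `b`. The letters of `w` then cross `u_v` one after the other, each time
with the letter just moved playing the role of `b`. -/

open FreeAlgebra

/-- The monomial `u_w = u_{w_1} ⋯ u_{w_n}` of a word `w`. -/
noncomputable def mon {N : ℕ} (w : List (Fin N)) : FreeAlgebra ℤ (Fin N) :=
  (w.map (ι ℤ)).prod

section Commutation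

variable {M α : Type*} [Monoid M] [LinearOrder α] {x : α → M}

theorem mul_prod_map_mul_comm_of_isChain_gt
    (hx : ∀ a b c, a < b → b < c → x b * x c * x a = x b * x a * x c)
    {b c : α} {v : List α} (hv : (b :: v).IsChain (· > ·)) (hbc : b < c) :
    x b * (v.map x).prod * x c = x b * x c * (v.map x).prod := by
  induction v generalizing b with
  | nil => simp
  | cons a v ih =>
    obtain ⟨hab, hv⟩ := List.isChain_cons_cons.1 hv
    calc x b * (x a :: v.map x).prod * x c
        = x b * (x a * (v.map x).prod * x c) := by simp only [List.prod_cons, mul_assoc]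
      _ = x b * x a * x c * (v.map x).prod := by
        rw [ih hv (hab.trans hbc)]; simp only [mul_assoc]
      _ = x b * x c * (x a :: v.map x).prod := by
        rw [← hx a b c hab hbc]; simp only [List.prod_cons, mul_assoc]

theorem mul_prod_map_mul_prod_map_comm_of_isChain
    (hx : ∀ a b c, a < b → b < c → x b * x c * x a = x b * x a * x c)
    {b : α} {v w : List α} (hv : (b :: v).IsChain (· > ·)) (hw : (b :: w).IsChain (· < ·)) :
    x b * (v.map x).prod * (w.map x).prod = x b * (w.map x).prod * (v.map x).prod := by
  induction w generalizing b with
  | nil => simp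
  | cons c w ih =>
    obtain ⟨hbc, hw⟩ := List.isChain_cons_cons.1 hw
    have hcv : (c :: v).IsChain (· > ·) := hv.imp_head fun hzb => hzb.trans hbc
    calc x b * (v.map x).prod * (x c :: w.map x).prod
        = x b * (v.map x).prod * x c * (w.map x).prod := by simp only [List.prod_cons, mul_assoc]
      _ = x b * (x c * (v.map x).prod * (w.map x).prod) := by
        rw [mul_prod_map_mul_comm_of_isChain_gt hx hv hbc]; simp only [mul_assoc]
      _ = x b * (x c :: w.map x).prod * (v.map x).prod := by
        rw [ih hcv hw]; simp only [List.prod_cons, mul_assoc]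

end Commutation

theorem ringCon_mk'_span_genB_comm {N : ℕ} {a b c : Fin N} (hab : a < b) (hbc : b < c) :
    (TwoSidedIdeal.span (genB N)).ringCon.mk' (ι ℤ b * ι ℤ c * ι ℤ a) =
      (TwoSidedIdeal.span (genB N)).ringCon.mk' (ι ℤ b * ι ℤ a * ι ℤ c) :=
  (RingCon.eq _).2 <| (TwoSidedIdeal.rel_iff _ _ _).2 <|
    TwoSidedIdeal.subset_span (Or.inl (Or.inr ⟨a, b, c, hab, hbc, rfl⟩))

/-- If `v` is strictly decreasing, `w` is strictly increasing, and
`v_1 < b < w_1`, then `u_b u_v u_w ≡ u_b u_w u_v (mod I_B)`. -/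
theorem stmt8 (N : ℕ) (v w : List (Fin N)) (b : Fin N)
    (hv : v.Chain' (· > ·)) (hw : w.Chain' (· < ·))
    (hv0 : v ≠ []) (hw0 : w ≠ [])
    (hvb : v.head hv0 < b) (hbw : b < w.head hw0) :
    ι ℤ b * mon v * mon w - ι ℤ b * mon w * mon v ∈ TwoSidedIdeal.span (genB N) := by
  set π := (TwoSidedIdeal.span (genB N)).ringCon.mk'
  have key := mul_prod_map_mul_prod_map_comm_of_isChain (x := π ∘ ι ℤ)
    (fun _ _ _ hab hbc => by
      simpa only [Function.comp_apply, map_mul] using ringCon_mk'_span_genB_comm hab hbc)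
    (List.IsChain.cons_of_ne_nil hv0 hv hvb) (List.IsChain.cons_of_ne_nil hw0 hw hbw)
  rw [← TwoSidedIdeal.rel_iff, ← RingCon.eq]
  change π _ = π _
  simp only [mon, map_mul, map_list_prod, List.map_map]
  exact key
end

section
/- Suppose words w and w' of the same length are related by replacing a consecutive factor bac by acb (with a < b < c) in some position. Then inv_k(w) = inv_k(w') for every k with c - a ≤ k, where inv_k counts pairs of positions (i,j) with i < j and 0 < w_i - w_j < k. -/
/-!
Splitting a word as `u ++ v`, its `k`-inversions are those inside `u`, those inside `v`, and
the cross pairs; the number of cross pairs depends only on the multisets of letters of `u`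
and `v`. Hence replacing a factor by a rearrangement with the same number of `k`-inversions
preserves `inv_k`, and for `k ≥ c - a` both `bac` and `acb` have exactly one `k`-inversion.
-/

/-- The `k`-inversion statistic of a word `v`: the number of pairs of positions
`(i,j)` with `i < j` and `0 < v_i - v_j < k`. -/
def invk (k : ℕ) (v : List ℕ) : ℕ :=
  (Finset.univ.filter (fun p : Fin v.length × Fin v.length =>
    p.1 < p.2 ∧ v.get p.2 < v.get p.1 ∧ v.get p.1 < v.get p.2 + k)).card

/-- The number of letters of `v` forming a `k`-inversion with a letter `x` placed before `v`. -/
def invkLetter (k x : ℕ) (v : List ℕ) : ℕ := v.countP (fun y => decide (y < x ∧ x < y + k))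

def invkCross (k : ℕ) (u v : List ℕ) : ℕ := (u.map (invkLetter k · v)).sum

lemma invkLetter_eq_sum (k x : ℕ) (v : List ℕ) :
    invkLetter k x v = ∑ j : Fin v.length, if v.get j < x ∧ x < v.get j + k then 1 else 0 := by
  induction v with
  | nil => simp [invkLetter]
  | cons y v ih =>
    rw [invkLetter, List.countP_cons, ← invkLetter, ih, add_comm]
    -- the two sides now differ only in the `Decidable` instances of their `if`s
    simp [Fin.sum_univ_succ, -Finset.sum_boole]; rfl

lemma invk_nil (k : ℕ) : invk k [] = 0 := by simp [invk]

lemma invk_cons (k x : ℕ) (v : List ℕ) :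
    invk k (x :: v) = invkLetter k x v + invk k v := by
  rw [invk, invk, Finset.card_filter, Finset.card_filter, Fintype.sum_prod_type,
    Fintype.sum_prod_type, invkLetter_eq_sum]
  simp [Fin.sum_univ_succ, Fin.succ_lt_succ_iff, -Finset.sum_boole]

lemma invk_append (k : ℕ) (u v : List ℕ) :
    invk k (u ++ v) = invk k u + invk k v + invkCross k u v := by
  induction u with
  | nil => simp [invk_nil, invkCross]
  | cons x u ih =>
    simp only [List.cons_append, invk_cons, ih, invkLetter, invkCross, List.map_cons,
      List.sum_cons, List.countP_append]
    omega

lemma invkCross_perm_left (k : ℕ) {u u' : List ℕ} (v : List ℕ) (h : u.Perm u') :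
    invkCross k u v = invkCross k u' v :=
  (h.map _).sum_eq

lemma invkCross_perm_right (k : ℕ) (u : List ℕ) {v v' : List ℕ} (h : v.Perm v') :
    invkCross k u v = invkCross k u v' :=
  congrArg List.sum (List.map_congr_left fun _ _ => h.countP_eq _)

theorem invk_append_append_of_perm (k : ℕ) (y z : List ℕ) {u u' : List ℕ} (h : u.Perm u')
    (hu : invk k u = invk k u') :
    invk k (y ++ u ++ z) = invk k (y ++ u' ++ z) := by
  simp only [List.append_assoc, invk_append, hu, invkCross_perm_left k z h,
    invkCross_perm_right k y (h.append_right z)]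

lemma invk_bac_eq_invk_acb (k : ℕ) {a b c : ℕ} (hab : a < b) (hbc : b < c) (hck : c - a ≤ k) :
    invk k [b, a, c] = invk k [a, c, b] := by
  simp only [invk_cons, invk_nil, invkLetter, List.countP_cons, List.countP_nil,
    decide_eq_true_eq]
  split_ifs <;> omega

theorem stmt9_general (k : ℕ) (y z : List ℕ) (a b c : ℕ)
    (hab : a < b) (hbc : b < c) (hck : c - a ≤ k) :
    invk k (y ++ [b, a, c] ++ z) = invk k (y ++ [a, c, b] ++ z) :=
  invk_append_append_of_perm k y z
    ((List.Perm.swap a b [c]).trans (.cons a (.swap c b [])))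
    (invk_bac_eq_invk_acb k hab hbc hck)

/-- If `w` and `w'` are related by replacing a consecutive factor `bac` by `acb`
(with `a < b < c`), then `inv_k(w) = inv_k(w')` for every `k` with `c - a ≤ k`. -/
theorem stmt9 (k : ℕ) (hk : 0 < k) (y z : List ℕ) (a b c : ℕ)
    (hy : ∀ x ∈ y, 0 < x) (hz : ∀ x ∈ z, 0 < x)
    (ha : 0 < a) (hab : a < b) (hbc : b < c) (hck : c - a ≤ k) :
    invk k (y ++ [b, a, c] ++ z) = invk k (y ++ [a, c, b] ++ z) :=
  stmt9_general k y z a b c hab hbc hck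
end

section
/- Suppose words w and w' of the same length are related by replacing a consecutive factor bac by bca (with a < b < c and c - a > k). Then inv_k(w) = inv_k(w'). -/
open Finset

def kInversionCount {n : ℕ} (k : ℕ) (f : Fin n → ℕ) : ℕ :=
  #{p : Fin n × Fin n | p.1 < p.2 ∧ f p.2 < f p.1 ∧ f p.1 < f p.2 + k}

theorem kInversionCount_comp_cast {m n : ℕ} (k : ℕ) (h : m = n) (f : Fin n → ℕ) :
    kInversionCount k (f ∘ Fin.cast h) = kInversionCount k f := by
  subst h; rfl

theorem Fin.swap_lt_swap_iff_of_succ_eq {n : ℕ} {i j x y : Fin n} (hij : i.val + 1 = j.val)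
    (hxy : ¬(x = i ∧ y = j)) (hyx : ¬(x = j ∧ y = i)) :
    Equiv.swap i j x < Equiv.swap i j y ↔ x < y := by
  simp only [Equiv.swap_apply_def, Fin.lt_def, Fin.ext_iff] at *
  split_ifs <;> omega

theorem kInversionCount_comp_swap {n : ℕ} (k : ℕ) (f : Fin n → ℕ) {i j : Fin n}
    (hij : i.val + 1 = j.val) (hij_inv : ¬(f j < f i ∧ f i < f j + k))
    (hji_inv : ¬(f i < f j ∧ f j < f i + k)) :
    kInversionCount k (f ∘ Equiv.swap i j) = kInversionCount k f := by
  refine card_equiv ((Equiv.swap i j).prodCongr (Equiv.swap i j)) fun ⟨x, y⟩ => ?_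
  simp only [mem_filter, mem_univ, true_and, Equiv.prodCongr_apply, Prod.map, Function.comp_apply]
  refine and_congr_left fun hf => ?_
  by_cases hx : x = i ∧ y = j
  · obtain ⟨rfl, rfl⟩ := hx
    simp only [Equiv.swap_apply_left, Equiv.swap_apply_right] at hf
    exact absurd hf hji_inv
  by_cases hy : x = j ∧ y = i
  · obtain ⟨rfl, rfl⟩ := hy
    simp only [Equiv.swap_apply_left, Equiv.swap_apply_right] at hf
    exact absurd hf hij_inv
  exact (Fin.swap_lt_swap_iff_of_succ_eq hij hx hy).symm

theorem getElem_append_cons_cons_swap {α : Type*} (l₁ l₂ : List α) (x y : α) (m : ℕ)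
    (hm : m < (l₁ ++ y :: x :: l₂).length) :
    (l₁ ++ y :: x :: l₂)[m] = (l₁ ++ x :: y :: l₂)[Equiv.swap l₁.length (l₁.length + 1) m]'(by
      simp only [List.length_append, List.length_cons] at hm ⊢
      rw [Equiv.swap_apply_def]
      split_ifs <;> omega) := by
  simp only [List.getElem_append, List.getElem_cons, Equiv.swap_apply_def]
  grind

theorem get_append_cons_cons_swap {α : Type*} (l₁ l₂ : List α) (x y : α) :
    (l₁ ++ y :: x :: l₂).get = (l₁ ++ x :: y :: l₂).get ∘
      Equiv.swap ⟨l₁.length, by simp⟩ ⟨l₁.length + 1, by simp⟩ ∘ Fin.cast (by simp) := by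
  funext m
  simp only [Function.comp_apply, List.get_eq_getElem,
    getElem_append_cons_cons_swap _ _ _ _ _ m.2]
  congr 1
  exact Fin.val_injective.swap_apply (⟨_, _⟩ : Fin (l₁ ++ x :: y :: l₂).length) ⟨_, _⟩
    (Fin.cast _ m)

theorem invk_append_cons_cons_swap (k : ℕ) (l₁ l₂ : List ℕ) (x y : ℕ)
    (hxy_inv : ¬(y < x ∧ x < y + k)) (hyx_inv : ¬(x < y ∧ y < x + k)) :
    invk k (l₁ ++ x :: y :: l₂) = invk k (l₁ ++ y :: x :: l₂) := by
  change kInversionCount k (l₁ ++ x :: y :: l₂).get = kInversionCount k _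
  rw [get_append_cons_cons_swap, ← Function.comp_assoc, kInversionCount_comp_cast,
    kInversionCount_comp_swap _ _ rfl (by simpa using hyx_inv) (by simpa using hxy_inv)]

theorem stmt10_general (k : ℕ) (y z : List ℕ) (a b c : ℕ) (hck : k < c - a) :
    invk k (y ++ [b, a, c] ++ z) = invk k (y ++ [b, c, a] ++ z) := by
  simpa using invk_append_cons_cons_swap k (y ++ [b]) z a c (by omega) (by omega)

/-- If `w` and `w'` are related by replacing a consecutive factor `bac` by `bca`
(with `a < b < c` and `c - a > k`), then `inv_k(w) = inv_k(w')`. -/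
theorem stmt10 (k : ℕ) (hk : 0 < k) (y z : List ℕ) (a b c : ℕ)
    (hy : ∀ x ∈ y, 0 < x) (hz : ∀ x ∈ z, 0 < x)
    (ha : 0 < a) (hab : a < b) (hbc : b < c) (hck : k < c - a) :
    invk k (y ++ [b, a, c] ++ z) = invk k (y ++ [b, c, a] ++ z) :=
  stmt10_general k y z a b c hck
end

section
/- Let I be a homogeneous two-sided ideal in U = Z⟨u_1,...,u_N⟩ and let J be a homogeneous element of degree d. Then the following are equivalent: (a) some positive integer multiple of J is congruent modulo I to a nonnegative integer combination of monomials; (b) for every element γ of the dual space U* which is a nonnegative integer combination of words and annihilates I_d (the degree-d part of I), the pairing ⟨J, γ⟩ is nonnegative. -/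
/-!
Everything happens in the finite-dimensional `ℚ`-space of coefficient vectors on the words of
length `d`. For (a) ⇒ (b), the degree-`d` part of `c • J - p ∈ I` lies in `I_d`, so pairing with
`γ` gives `c ⟨J, γ⟩ = ⟨p_d, γ⟩ ≥ 0`. For (b) ⇒ (a), Farkas' lemma writes `J = v + q` with
`v ∈ span_ℚ I_d` and `q ≥ 0` coordinatewise: otherwise a separating functional is nonnegative on
words, kills `I_d` and is negative on `J`, and clearing its denominators contradicts (b).
Clearing the denominators of `v` then yields (a).
-/

/-- We model `U = ℤ⟨u_1,…,u_N⟩` as the monoid algebra of the free monoid of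
words in the alphabet `{1,…,N}`; its elements are finitely supported
`ℤ`-valued coefficient functions on words. -/
abbrev FreeRing' (N : ℕ) := MonoidAlgebra ℤ (FreeMonoid (Fin N))

/-- The degree-`d` homogeneous projection: keep only coefficients of words of length `d`. -/
noncomputable def proj (N d : ℕ) (x : FreeRing' N) : FreeRing' N :=
  MonoidAlgebra.ofCoeff <| Finsupp.filter (fun w : FreeMonoid (Fin N) => (FreeMonoid.toList w).length = d) x.coeff

open Matrix

section Farkas

variable {K W : Type*} [Field K] [LinearOrder K] [IsStrictOrderedRing K] [Fintype W]

theorem eq_zero_of_forall_dotProduct_nonneg {J : W → K} (h : ∀ γ, 0 ≤ J ⬝ᵥ γ) : J = 0 := by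
  have := h (-J)
  rw [dotProduct_neg, neg_nonneg] at this
  exact dotProduct_self_eq_zero.mp
    (this.antisymm (Fintype.sum_nonneg fun w => mul_self_nonneg (J w)))

theorem dotProduct_sub_div_smul (x y a b : W → K) (D : K) :
    x ⬝ᵥ (y - (a ⬝ᵥ y / D) • b) = (x - (x ⬝ᵥ b / D) • a) ⬝ᵥ y := by
  simp only [dotProduct_sub, sub_dotProduct, dotProduct_smul, smul_dotProduct, smul_eq_mul,
    dotProduct_comm a y]
  ring

theorem exists_nonneg_sum_smul_eq_of_forall_dotProduct_nonneg_fin :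
    ∀ (n : ℕ) (g : Fin n → W → K) (J : W → K),
      (∀ γ, (∀ i, 0 ≤ g i ⬝ᵥ γ) → 0 ≤ J ⬝ᵥ γ) → ∃ c : Fin n → K, 0 ≤ c ∧ ∑ i, c i • g i = J
  | 0, g, J, h => ⟨0, le_rfl, by simp [eq_zero_of_forall_dotProduct_nonneg fun γ => h γ nofun]⟩
  | n + 1, g, J, h => by
    by_cases htail : ∀ γ, (∀ i : Fin n, 0 ≤ g i.succ ⬝ᵥ γ) → 0 ≤ J ⬝ᵥ γ
    · obtain ⟨c, hc, hsum⟩ :=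
        exists_nonneg_sum_smul_eq_of_forall_dotProduct_nonneg_fin n (fun i => g i.succ) J htail
      refine ⟨Fin.cons 0 c, Fin.forall_fin_succ.mpr ⟨le_rfl, hc⟩, ?_⟩
      simpa [Fin.sum_univ_succ] using hsum
    push Not at htail
    obtain ⟨γ₀, hγ₀, hJγ₀⟩ := htail
    set D := g 0 ⬝ᵥ γ₀
    have hD : D < 0 := by
      by_contra! hD
      exact hJγ₀.not_ge (h γ₀ (Fin.cases hD hγ₀))
    -- `x ↦ x - (x ⬝ᵥ γ₀ / D) • g 0` kills the pairing with `γ₀`, reducing to `n` generators.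
    let μ : Fin n → K := fun i => g i.succ ⬝ᵥ γ₀ / D
    let lam := J ⬝ᵥ γ₀ / D
    have hμ : ∀ i, μ i ≤ 0 := fun i => div_nonpos_of_nonneg_of_nonpos (hγ₀ i) hD.le
    have hlam : 0 < lam := div_pos_of_neg_of_neg hJγ₀ hD
    obtain ⟨c, hc, hsum⟩ := exists_nonneg_sum_smul_eq_of_forall_dotProduct_nonneg_fin n
      (fun i => g i.succ - μ i • g 0) (J - lam • g 0) fun γ hγ => by
        have hg0 : 0 ≤ g 0 ⬝ᵥ (γ - (g 0 ⬝ᵥ γ / D) • γ₀) := by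
          rw [dotProduct_sub_div_smul, div_self hD.ne, one_smul, sub_self, zero_dotProduct]
        have key := h _ (Fin.cases hg0 fun i => by rw [dotProduct_sub_div_smul]; exact hγ i)
        rwa [dotProduct_sub_div_smul] at key
    refine ⟨Fin.cons (lam - ∑ i, c i * μ i) c, Fin.forall_fin_succ.mpr ⟨?_, hc⟩, ?_⟩
    · have : ∑ i, c i * μ i ≤ 0 :=
        Finset.sum_nonpos fun i _ => mul_nonpos_of_nonneg_of_nonpos (hc i) (hμ i)
      simp only [Pi.zero_apply, Fin.cons_zero]; linarith
    · rw [Fin.sum_univ_succ, Fin.cons_zero]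
      simp only [Fin.cons_succ]
      rw [eq_sub_iff_add_eq] at hsum
      rw [← hsum]
      simp only [smul_sub, Finset.sum_sub_distrib, sub_smul, Finset.sum_smul, smul_smul]
      abel

theorem exists_nonneg_sum_smul_eq_of_forall_dotProduct_nonneg {ι : Type*} [Fintype ι]
    (g : ι → W → K) (J : W → K) (h : ∀ γ, (∀ i, 0 ≤ g i ⬝ᵥ γ) → 0 ≤ J ⬝ᵥ γ) :
    ∃ c : ι → K, 0 ≤ c ∧ ∑ i, c i • g i = J := by
  let e := Fintype.equivFin ι
  obtain ⟨c, hc, hsum⟩ := exists_nonneg_sum_smul_eq_of_forall_dotProduct_nonneg_fin _ (g ∘ e.symm)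
    J fun γ hγ => h γ fun i => by simpa using hγ (e i)
  exact ⟨c ∘ e, fun i => hc (e i), by rw [← hsum, ← e.sum_comp]; simp⟩

theorem exists_mem_le_of_forall_dotProduct_nonneg (V : Submodule K (W → K)) (J : W → K)
    (h : ∀ γ, 0 ≤ γ → (∀ x ∈ V, x ⬝ᵥ γ = 0) → 0 ≤ J ⬝ᵥ γ) : ∃ v ∈ V, v ≤ J := by
  classical
  obtain ⟨s, rfl⟩ := (Submodule.fg_iff_finiteDimensional V).mpr inferInstance
  let g : (s ⊕ s) ⊕ W → W → K := Sum.elim (Sum.elim (fun x => x) fun x => -x) fun w => Pi.single w 1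
  obtain ⟨c, hc, hcJ⟩ := exists_nonneg_sum_smul_eq_of_forall_dotProduct_nonneg g J fun γ hγ => by
    refine h γ (fun w => by simpa [g] using hγ (.inr w)) fun x hx => ?_
    induction hx using Submodule.span_induction with
    | mem x hx =>
      have := hγ (.inl (.inr ⟨x, hx⟩))
      simp only [g, Sum.elim_inl, Sum.elim_inr, neg_dotProduct] at this
      exact le_antisymm (by linarith) (hγ (.inl (.inl ⟨x, hx⟩)))
    | zero => exact zero_dotProduct γ
    | add x y _ _ hx hy => rw [add_dotProduct, hx, hy, add_zero]
    | smul a x _ hx => rw [smul_dotProduct, hx, smul_zero]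
  refine ⟨∑ x : s, (c (.inl (.inl x)) - c (.inl (.inr x))) • (x : W → K),
    Submodule.sum_mem _ fun x _ => Submodule.smul_mem _ _ (Submodule.subset_span x.2), fun w => ?_⟩
  have := congrFun hcJ w
  simp only [Finset.sum_apply, Pi.smul_apply, smul_eq_mul, Fintype.sum_sum_type, Sum.elim_inl,
    Finset.univ_eq_attach, Sum.elim_inr, Pi.neg_apply, mul_neg, Finset.sum_neg_distrib,
    Pi.single_apply, mul_ite, mul_one, mul_zero, Finset.sum_ite_eq, Finset.mem_univ, ↓reduceIte,
    sub_mul, Finset.sum_sub_distrib, tsub_le_iff_right, ge_iff_le, g] at this ⊢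
  linarith [show 0 ≤ c (.inr w) from hc _]

end Farkas

theorem Rat.exists_pos_nat_mul_eq_int {ι : Type*} [Fintype ι] (q : ι → ℚ) :
    ∃ m : ℕ, 0 < m ∧ ∃ k : ι → ℤ, ∀ i, m * q i = k i := by
  refine ⟨∏ i, (q i).den, Finset.prod_pos fun i _ => (q i).pos, ?_⟩
  choose t ht using fun i => Finset.dvd_prod_of_mem (fun j => (q j).den) (Finset.mem_univ i)
  exact ⟨fun i => t i * (q i).num, fun i => by
    rw [ht i, Nat.cast_mul, mul_comm ((q i).den : ℚ), mul_assoc, Rat.den_mul_eq_num]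
    push_cast
    rfl⟩

namespace FreeRing'

variable {N : ℕ}

def homogeneousComponent (N d : ℕ) : AddSubgroup (FreeRing' N) where
  carrier := {z | ∀ w ∈ z.coeff.support, (FreeMonoid.toList w).length = d}
  zero_mem' := by simp
  add_mem' {x y} hx hy w hw := by
    classical
    rw [MonoidAlgebra.coeff_add] at hw
    exact (Finset.mem_union.mp (Finsupp.support_add hw)).elim (hx w) (hy w)
  neg_mem' {x} hx w hw := hx w (by simpa using hw)

theorem coeff_eq_zero_of_mem_homogeneousComponent {d : ℕ} {z : FreeRing' N}
    (hz : z ∈ homogeneousComponent N d) {w : FreeMonoid (Fin N)}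
    (hw : (FreeMonoid.toList w).length ≠ d) : z.coeff w = 0 :=
  Finsupp.notMem_support_iff.mp fun h => hw (hz w h)

theorem coeff_proj (d : ℕ) (x : FreeRing' N) (w : FreeMonoid (Fin N)) :
    (proj N d x).coeff w = if (FreeMonoid.toList w).length = d then x.coeff w else 0 :=
  Finsupp.filter_apply ..

theorem proj_mem_homogeneousComponent (d : ℕ) (x : FreeRing' N) :
    proj N d x ∈ homogeneousComponent N d := fun w hw => by
  by_contra h
  exact Finsupp.mem_support_iff.mp hw (by rw [coeff_proj, if_neg h])

def wordOfVector (N d : ℕ) : List.Vector (Fin N) d ↪ FreeMonoid (Fin N) :=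
  ⟨fun v => FreeMonoid.ofList v.toList, fun _ _ h =>
    List.Vector.toList_injective (congrArg FreeMonoid.toList h)⟩

theorem length_wordOfVector {d : ℕ} (v : List.Vector (Fin N) d) :
    (FreeMonoid.toList (wordOfVector N d v)).length = d :=
  v.toList_length

theorem exists_wordOfVector {d : ℕ} {w : FreeMonoid (Fin N)}
    (hw : (FreeMonoid.toList w).length = d) :
    ∃ v, wordOfVector N d v = w :=
  ⟨⟨FreeMonoid.toList w, hw⟩, rfl⟩

noncomputable def coeffVec (d : ℕ) : FreeRing' N →+ (List.Vector (Fin N) d → ℚ) where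
  toFun z v := z.coeff (wordOfVector N d v)
  map_zero' := by ext; simp
  map_add' x y := by ext; simp

theorem coeffVec_apply (d : ℕ) (z : FreeRing' N) (v : List.Vector (Fin N) d) :
    coeffVec d z v = z.coeff (wordOfVector N d v) := rfl

theorem coeffVec_proj (d : ℕ) (x : FreeRing' N) : coeffVec d (proj N d x) = coeffVec d x := by
  ext v
  rw [coeffVec_apply, coeffVec_apply, coeff_proj, if_pos (length_wordOfVector v)]

theorem coeff_nonneg_of_coeffVec_nonneg {d : ℕ} {z : FreeRing' N}
    (hz : z ∈ homogeneousComponent N d) (h : 0 ≤ coeffVec d z) (w : FreeMonoid (Fin N)) :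
    0 ≤ z.coeff w := by
  by_cases hw : (FreeMonoid.toList w).length = d
  · obtain ⟨v, rfl⟩ := exists_wordOfVector hw
    simpa [coeffVec_apply] using h v
  · rw [coeff_eq_zero_of_mem_homogeneousComponent hz hw]

theorem sum_support_coeff_mul_eq_dotProduct {d : ℕ} {z : FreeRing' N}
    (hz : z ∈ homogeneousComponent N d) (γ : FreeMonoid (Fin N) →₀ ℤ) :
    ((∑ w ∈ z.coeff.support, z.coeff w * γ w : ℤ) : ℚ) =
      coeffVec d z ⬝ᵥ fun v => (γ (wordOfVector N d v) : ℚ) := by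
  classical
  rw [Finset.sum_subset (s₁ := z.coeff.support) (s₂ := Finset.univ.map (wordOfVector N d))
    (fun w hw => Finset.mem_map.mpr <|
      (exists_wordOfVector (hz w hw)).imp fun v hv => ⟨Finset.mem_univ v, hv⟩)
    fun w _ hw => by rw [Finsupp.notMem_support_iff.mp hw, zero_mul], Finset.sum_map]
  push_cast
  rfl

noncomputable def extendByZero {d : ℕ} (k : List.Vector (Fin N) d → ℤ) :
    FreeMonoid (Fin N) →₀ ℤ :=
  Finsupp.embDomain (wordOfVector N d) (Finsupp.equivFunOnFinite.symm k)

theorem extendByZero_wordOfVector {d : ℕ} (k : List.Vector (Fin N) d → ℤ)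
    (v : List.Vector (Fin N) d) : extendByZero k (wordOfVector N d v) = k v :=
  Finsupp.embDomain_apply_self ..

theorem extendByZero_nonneg {d : ℕ} {k : List.Vector (Fin N) d → ℤ} (hk : 0 ≤ k)
    (w : FreeMonoid (Fin N)) : 0 ≤ extendByZero k w := by
  by_cases hw : w ∈ Set.range (wordOfVector N d)
  · obtain ⟨v, rfl⟩ := hw
    rw [extendByZero_wordOfVector]
    exact hk v
  · rw [extendByZero, Finsupp.embDomain_of_notMem_range _ _ _ hw]

variable {I : TwoSidedIdeal (FreeRing' N)} {d : ℕ} {J : FreeRing' N}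

theorem sum_support_coeff_mul_nonneg_of_zsmul_sub_mem (hIhom : ∀ x ∈ I, ∀ e : ℕ, proj N e x ∈ I)
    (hJ : J ∈ homogeneousComponent N d) {c : ℕ} (hc : 0 < c) {p : FreeRing' N}
    (hp : ∀ w, 0 ≤ p.coeff w) (hmem : (c : ℤ) • J - p ∈ I) {γ : FreeMonoid (Fin N) →₀ ℤ}
    (hγ : ∀ w, 0 ≤ γ w)
    (hγI : ∀ z ∈ I, z ∈ homogeneousComponent N d → ∑ w ∈ z.coeff.support, z.coeff w * γ w = 0) :
    0 ≤ ∑ w ∈ J.coeff.support, J.coeff w * γ w := by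
  set γ' : List.Vector (Fin N) d → ℚ := fun v => γ (wordOfVector N d v)
  have hproj := proj_mem_homogeneousComponent d ((c : ℤ) • J - p)
  have key : (c : ℚ) * (coeffVec d J ⬝ᵥ γ') = coeffVec d p ⬝ᵥ γ' := by
    have := congrArg (Int.cast : ℤ → ℚ) (hγI _ (hIhom _ hmem d) hproj)
    rw [sum_support_coeff_mul_eq_dotProduct hproj, coeffVec_proj, map_sub, map_zsmul,
      sub_dotProduct, smul_dotProduct, Int.cast_zero, sub_eq_zero] at this
    simpa using this
  have hp' : 0 ≤ coeffVec d p ⬝ᵥ γ' :=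
    dotProduct_nonneg_of_nonneg (fun v => Int.cast_nonneg (hp _))
      fun v => Int.cast_nonneg (hγ _)
  rw [← Int.cast_nonneg_iff (R := ℚ), sum_support_coeff_mul_eq_dotProduct hJ]
  exact nonneg_of_mul_nonneg_right (key ▸ hp') (by exact_mod_cast hc)

theorem dotProduct_coeffVec_nonneg_of_forall_sum_support_coeff_mul_nonneg
    (hJ : J ∈ homogeneousComponent N d)
    (h : ∀ γ : FreeMonoid (Fin N) →₀ ℤ, (∀ w, 0 ≤ γ w) →
      (∀ z ∈ I, z ∈ homogeneousComponent N d → ∑ w ∈ z.coeff.support, z.coeff w * γ w = 0) →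
      0 ≤ ∑ w ∈ J.coeff.support, J.coeff w * γ w)
    {γ : List.Vector (Fin N) d → ℚ} (hγ : 0 ≤ γ)
    (hγI : ∀ z ∈ I, z ∈ homogeneousComponent N d → coeffVec d z ⬝ᵥ γ = 0) :
    0 ≤ coeffVec d J ⬝ᵥ γ := by
  obtain ⟨m, hm, k, hk⟩ := Rat.exists_pos_nat_mul_eq_int γ
  have hk' : 0 ≤ k := fun v => by
    have : (0 : ℚ) ≤ k v := hk v ▸ mul_nonneg m.cast_nonneg (hγ v)
    exact_mod_cast this
  have scale : ∀ z ∈ homogeneousComponent N d,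
      ((∑ w ∈ z.coeff.support, z.coeff w * extendByZero k w : ℤ) : ℚ) =
        m * (coeffVec d z ⬝ᵥ γ) := fun z hz => by
    rw [sum_support_coeff_mul_eq_dotProduct hz, ← smul_eq_mul, ← dotProduct_smul]
    congr 1
    funext v
    simp [extendByZero_wordOfVector, hk]
  have := h (extendByZero k) (extendByZero_nonneg hk') fun z hz hzd => by
    have := (scale z hzd).trans (show _ = (0 : ℚ) by rw [hγI z hz hzd, mul_zero])
    exact_mod_cast this
  rw [← Int.cast_nonneg_iff (R := ℚ), scale J hJ] at this
  exact nonneg_of_mul_nonneg_right this (by exact_mod_cast hm)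

theorem exists_zsmul_sub_mem_of_le_coeffVec (hJ : J ∈ homogeneousComponent N d)
    {v : List.Vector (Fin N) d → ℚ}
    (hv : v ∈ Submodule.span ℚ (coeffVec d '' ((I : Set (FreeRing' N)) ∩ homogeneousComponent N d)))
    (hvJ : v ≤ coeffVec d J) :
    ∃ c : ℕ, 0 < c ∧ ∃ p : FreeRing' N, (∀ w, 0 ≤ p.coeff w) ∧ (c : ℤ) • J - p ∈ I := by
  obtain ⟨t, htI, a, rfl⟩ := (Submodule.mem_span_image_iff_exists_fun ℚ).mp hv
  obtain ⟨M, hM, k, hk⟩ := Rat.exists_pos_nat_mul_eq_int a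
  set S := ∑ i, k i • (i : FreeRing' N)
  have hSI : S ∈ I := sum_mem fun i _ => zsmul_mem (htI i.2).1 _
  have hSd : S ∈ homogeneousComponent N d := sum_mem fun i _ => zsmul_mem (htI i.2).2 _
  have hS : coeffVec d S = (M : ℚ) • ∑ i, a i • coeffVec d i := by
    simp only [S, map_sum, map_zsmul, Finset.smul_sum, smul_smul, hk, Int.cast_smul_eq_zsmul]
  refine ⟨M, hM, (M : ℤ) • J - S, coeff_nonneg_of_coeffVec_nonneg
    (sub_mem (zsmul_mem hJ _) hSd) fun u => ?_, by rwa [sub_sub_cancel]⟩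
  have := hvJ u
  simp only [map_sub, map_zsmul, hS, Pi.sub_apply, Pi.smul_apply, Pi.zero_apply] at this ⊢
  rw [natCast_zsmul, nsmul_eq_mul, smul_eq_mul, ← mul_sub]
  exact mul_nonneg M.cast_nonneg (sub_nonneg.mpr this)

end FreeRing'

open FreeRing'

/-- For a homogeneous two-sided ideal `I` and a homogeneous element `J` of degree `d`,
the following are equivalent: (a) some positive integer multiple of `J` is congruent
mod `I` to a nonnegative integer combination of monomials; (b) for every nonnegative
integer combination of words `γ ∈ U*` annihilating the degree-`d` part of `I`, the
pairing `⟨J, γ⟩` is nonnegative. -/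
theorem stmt13 (N d : ℕ) (I : TwoSidedIdeal (FreeRing' N))
    (hIhom : ∀ x ∈ I, ∀ e : ℕ, proj N e x ∈ I)
    (J : FreeRing' N) (hJhom : ∀ w ∈ J.coeff.support, (FreeMonoid.toList w).length = d) :
    (∃ c : ℕ, 0 < c ∧ ∃ p : FreeRing' N, (∀ w, 0 ≤ p.coeff w) ∧ (c : ℤ) • J - p ∈ I) ↔
    (∀ γ : FreeMonoid (Fin N) →₀ ℤ, (∀ w, 0 ≤ γ w) →
      (∀ z ∈ I, (∀ w ∈ z.coeff.support, (FreeMonoid.toList w).length = d) →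
        ∑ w ∈ z.coeff.support, z.coeff w * γ w = 0) →
      0 ≤ ∑ w ∈ J.coeff.support, J.coeff w * γ w) := by
  have hJ : J ∈ homogeneousComponent N d := hJhom
  constructor
  · rintro ⟨c, hc, p, hp, hmem⟩ γ hγ hγI
    exact sum_support_coeff_mul_nonneg_of_zsmul_sub_mem hIhom hJ hc hp hmem hγ hγI
  · intro h
    let V := Submodule.span ℚ (coeffVec d '' ((I : Set (FreeRing' N)) ∩ homogeneousComponent N d))
    obtain ⟨v, hv, hvJ⟩ := exists_mem_le_of_forall_dotProduct_nonneg V (coeffVec d J)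
      fun γ hγ hγV => dotProduct_coeffVec_nonneg_of_forall_sum_support_coeff_mul_nonneg hJ h hγ
        fun z hz hzd => hγV _ (Submodule.subset_span (Set.mem_image_of_mem _ ⟨hz, hzd⟩))
    exact exists_zsmul_sub_mem_of_le_coeffVec hJ hv hvJ
end

section
/- For any semistandard Young tableau T, the monomial of its column reading word is congruent to the monomial of its diagonal reading word modulo the ideal I_B: u_{colword(T)} ≡ u_{diagread(T)} mod I_B. -/
/-!
The relations `x y w ≡ y x w` for `x < w < y` suffice. Induct on the number of columns. Appending
column `m`, read bottom to top as `c_{r-1} ⋯ c_0`, to the diagonal reading word of the first `m`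
columns gives `C D_{r-1} ⋯ D_0 c_{r-1} ⋯ c_0`, where `D_i` is the (increasing) part of the diagonal
through `(i, m)` left of column `m`, so all its letters are `< c_i` by semistandardness. Moving
increasing words to the right past decreasing ones rearranges this into
`C D_{r-1} c_{r-1} ⋯ D_0 c_0`, the diagonal reading word of the first `m + 1` columns.
-/

open FreeAlgebra

/-- Column reading word of a filling `T` of the Young diagram `μ` (English
convention, `T i j` the entry in row `i`, column `j`): concatenate the columns
left to right, each read bottom to top. -/
def colword {N : ℕ} (μ : YoungDiagram) (T : ℕ → ℕ → Fin N) : List (Fin N) :=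
  (List.range (μ.rowLen 0)).flatMap (fun j =>
    ((List.range (μ.colLen j)).reverse).map (fun i => T i j))

/-- Diagonal reading word of a filling `T` of `μ`: concatenate the diagonals
`{(i,j) : j - i = d}` starting from the southwesternmost (most negative `d`),
reading each diagonal in the southeast direction (increasing `i`). -/
def diagread {N : ℕ} (μ : YoungDiagram) (T : ℕ → ℕ → Fin N) : List (Fin N) :=
  (List.range (μ.colLen 0 + μ.rowLen 0 - 1)).flatMap (fun t =>
    (List.range (μ.colLen 0)).filterMap (fun (i : ℕ) =>
      let jz : ℤ := (i : ℤ) + ((t : ℤ) - ((μ.colLen 0 : ℤ) - 1))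
      if 0 ≤ jz ∧ ((i, jz.toNat) : ℕ × ℕ) ∈ μ then some (T i jz.toNat) else none))

theorem List.pairwise_map_range' {α : Type*} {R : α → α → Prop} {f : ℕ → α} {s n : ℕ}
    (h : ∀ i j, s ≤ i → i < j → j < s + n → R (f i) (f j)) :
    ((List.range' s n).map f).Pairwise R := by
  rw [List.pairwise_map]
  refine (List.pairwise_lt_range' (s := s) (n := n)).imp_of_mem fun hi hj hij => ?_
  rw [List.mem_range'_1] at hi hj
  exact h _ _ hi.1 hij hj.2

theorem List.range_eq_append_range' {a b c : ℕ} (hab : a ≤ b) (hbc : b ≤ c) :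
    List.range c = List.range a ++ List.range' a (b - a) ++ List.range' b (c - b) := by
  have e₁ := List.range'_append_1 (s := 0) (m := a) (n := b - a)
  have e₂ := List.range'_append_1 (s := 0) (m := b) (n := c - b)
  rw [Nat.zero_add, Nat.add_sub_cancel' hab] at e₁
  rw [Nat.zero_add, Nat.add_sub_cancel' hbc] at e₂
  rw [List.range_eq_range', List.range_eq_range', ← e₂, ← e₁]

theorem List.filterMap_range_eq_map_range' {α : Type*} (g : ℕ → α) (P : ℕ → Prop)
    [DecidablePred P] {a b n : ℕ} (hab : a ≤ b) (hbn : b ≤ n)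
    (hP : ∀ x < n, P x ↔ a ≤ x ∧ x < b) :
    (List.range n).filterMap (fun x => if P x then some (g x) else none) =
      (List.range' a (b - a)).map g := by
  rw [List.range_eq_append_range' hab hbn, List.filterMap_append, List.filterMap_append]
  have hout : ∀ l : List ℕ, (∀ x ∈ l, x < n ∧ ¬(a ≤ x ∧ x < b)) →
      l.filterMap (fun x => if P x then some (g x) else none) = [] := fun l hl =>
    List.filterMap_eq_nil_iff.mpr fun x hx => if_neg fun h => (hl x hx).2 ((hP x (hl x hx).1).mp h)
  rw [hout (List.range a) fun x hx => by simp at hx; omega,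
    hout (List.range' b (n - b)) fun x hx => by simp at hx; omega,
    List.nil_append, List.append_nil, ← List.filterMap_eq_map]
  refine List.filterMap_congr fun x hx => if_pos ((hP x ?_).mpr ?_) <;>
    · simp at hx; omega

theorem List.flatMap_range_eq_append_reverse {α : Type*} (f : ℕ → List α) {s r K : ℕ}
    (hK : s + r ≤ K) (hf : ∀ t, s + r ≤ t → f t = []) :
    (List.range K).flatMap f =
      (List.range s).flatMap f ++
        ((List.range r).map fun i => f (s + r - 1 - i)).reverse.flatten := by
  rw [List.range_eq_append_range' (Nat.le_add_right s r) hK, List.flatMap_append,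
    List.flatMap_append,
    (List.flatMap_eq_nil_iff (l := List.range' (s + r) (K - (s + r)))).mpr fun t ht =>
      hf t (by simp at ht; omega),
    List.append_nil, Nat.add_sub_cancel_left, ← List.reverse_reverse (List.range' s r),
    List.reverse_range', List.flatMap_def, List.flatMap_def, List.map_reverse, List.map_map]
  rfl

variable {N : ℕ}

def WordCongr (u v : List (Fin N)) : Prop :=
  (TwoSidedIdeal.span (genB N)).ringCon (mon u) (mon v)

local infix:50 " ≡B " => WordCongr

namespace WordCongr

theorem refl (u : List (Fin N)) : u ≡B u := RingCon.refl _ _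

theorem trans {u v w : List (Fin N)} (h₁ : u ≡B v) (h₂ : v ≡B w) : u ≡B w :=
  RingCon.trans _ h₁ h₂

instance : @Trans (List (Fin N)) _ _ WordCongr WordCongr WordCongr := ⟨trans⟩

theorem append_left (p : List (Fin N)) {u v : List (Fin N)} (h : u ≡B v) : p ++ u ≡B p ++ v := by
  simpa only [WordCongr, mon, List.map_append, List.prod_append] using
    RingCon.mul _ (RingCon.refl _ _) h

theorem append_right (q : List (Fin N)) {u v : List (Fin N)} (h : u ≡B v) : u ++ q ≡B v ++ q := by
  simpa only [WordCongr, mon, List.map_append, List.prod_append] using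
    RingCon.mul _ h (RingCon.refl _ _)

theorem swap {x y w : Fin N} (hxw : x < w) (hwy : w < y) (q : List (Fin N)) :
    x :: y :: w :: q ≡B y :: x :: w :: q := by
  have hgen : [x, y, w] ≡B [y, x, w] := by
    rw [WordCongr, TwoSidedIdeal.rel_iff]
    refine TwoSidedIdeal.subset_span (Or.inr ⟨x, w, y, hxw, hwy, ?_⟩)
    simp only [mon, List.map_cons, List.map_nil, List.prod_cons, List.prod_nil, mul_one, mul_assoc]
  exact hgen.append_right q

theorem cons_append_of_decreasing {Y : List (Fin N)} {x z : Fin N} (hY : Y.Pairwise (· > ·))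
    (hzY : ∀ y ∈ Y, z < y) (hxz : x < z) (q : List (Fin N)) :
    x :: (Y ++ z :: q) ≡B Y ++ x :: z :: q := by
  induction Y with
  | nil => exact refl _
  | cons y Y ih =>
    rw [List.pairwise_cons] at hY
    have hzy : z < y := hzY y List.mem_cons_self
    have hswap : x :: y :: (Y ++ z :: q) ≡B y :: x :: (Y ++ z :: q) := by
      cases Y with
      | nil => exact swap hxz hzy q
      | cons y' Y => exact swap (hxz.trans (hzY y' (by simp))) (hY.1 y' List.mem_cons_self) _
    exact hswap.trans ((ih hY.2 fun y hy => hzY y (List.mem_cons_of_mem _ hy)).append_left [y])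

theorem append_comm_of_increasing_decreasing {H Y : List (Fin N)} {z : Fin N}
    (hH : H.Pairwise (· < ·)) (hY : Y.Pairwise (· > ·)) (hHz : ∀ h ∈ H, h < z)
    (hzY : ∀ y ∈ Y, z < y) (q : List (Fin N)) :
    H ++ Y ++ z :: q ≡B Y ++ H ++ z :: q := by
  induction H using List.reverseRecOn generalizing z q with
  | nil => simpa using refl _
  | append_singleton H a ih =>
    rw [List.pairwise_append] at hH
    have haz : a < z := hHz a (by simp)
    calc H ++ [a] ++ Y ++ z :: q = H ++ (a :: (Y ++ z :: q)) := by simp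
      _ ≡B H ++ (Y ++ a :: z :: q) := (cons_append_of_decreasing hY hzY haz q).append_left H
      _ = H ++ Y ++ a :: z :: q := by simp
      _ ≡B Y ++ H ++ a :: z :: q :=
        ih hH.1 (fun h hh => hH.2.2 h hh a (by simp)) (fun y hy => haz.trans (hzY y hy)) _
      _ = Y ++ (H ++ [a]) ++ z :: q := by simp

variable {H : ℕ → List (Fin N)} {c : ℕ → Fin N} {n : ℕ}

/-- `H_{n-1} ⋯ H_0 c' c_{n-1} ⋯ c_0 ≡ c' H_{n-1} c_{n-1} ⋯ H_0 c_0`. -/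
theorem cons_interleave (hH : ∀ i < n, (H i).Pairwise (· < ·)) (hHc : ∀ i < n, ∀ x ∈ H i, x < c i)
    (hc : ∀ i j, i < j → j < n → c i < c j) {c' : Fin N} (hc' : ∀ i < n, c i < c') :
    ((List.range n).map H).reverse.flatten ++ c' :: ((List.range n).map c).reverse ≡B
      c' :: ((List.range n).map fun i => H i ++ [c i]).reverse.flatten := by
  induction n generalizing H c with
  | zero => exact refl _
  | succ n ih =>
    have hY : (c' :: ((List.range n).map (c ∘ Nat.succ)).reverse).Pairwise (· > ·) := by
      rw [List.pairwise_cons, List.pairwise_reverse, List.range_eq_range']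
      refine ⟨fun x hx => ?_,
        List.pairwise_map_range' fun i j _ hij hj => hc _ _ (by omega) (by omega)⟩
      obtain ⟨i, hi, rfl⟩ := List.mem_map.mp (List.mem_reverse.mp hx)
      exact hc' _ (by simp at hi; omega)
    have hzY : ∀ y ∈ c' :: ((List.range n).map (c ∘ Nat.succ)).reverse, c 0 < y := by
      simp only [List.mem_cons, List.mem_reverse, List.mem_map, List.mem_range, Function.comp]
      rintro y (rfl | ⟨i, hi, rfl⟩)
      · exact hc' 0 (by omega)
      · exact hc _ _ (by omega) (by omega)
    have hswap := append_comm_of_increasing_decreasing (hH 0 (by omega)) hY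
      (hHc 0 (by omega)) hzY []
    have hrest := ih (H := H ∘ Nat.succ) (c := c ∘ Nat.succ) (fun i hi => hH _ (by omega))
      (fun i hi => hHc _ (by omega)) (fun i j hij hj => hc _ _ (by omega) (by omega))
      (fun i hi => hc' _ (by omega))
    set S := ((List.range n).map (c ∘ Nat.succ)).reverse
    calc ((List.range (n + 1)).map H).reverse.flatten ++ c' :: ((List.range (n + 1)).map c).reverse
        = ((List.range n).map (H ∘ Nat.succ)).reverse.flatten ++ (H 0 ++ (c' :: S) ++ [c 0]) := by
          simp [S, List.range_succ_eq_map]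
      _ ≡B ((List.range n).map (H ∘ Nat.succ)).reverse.flatten ++ ((c' :: S) ++ H 0 ++ [c 0]) :=
          hswap.append_left _
      _ = (((List.range n).map (H ∘ Nat.succ)).reverse.flatten ++ c' :: S) ++ (H 0 ++ [c 0]) := by
          simp
      _ ≡B c' :: ((List.range n).map fun i => H (i + 1) ++ [c (i + 1)]).reverse.flatten
            ++ (H 0 ++ [c 0]) := hrest.append_right _
      _ = c' :: ((List.range (n + 1)).map fun i => H i ++ [c i]).reverse.flatten := by
          simp [List.range_succ_eq_map, Function.comp_def]

theorem interleave (hH : ∀ i < n, (H i).Pairwise (· < ·)) (hHc : ∀ i < n, ∀ x ∈ H i, x < c i)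
    (hc : ∀ i j, i < j → j < n → c i < c j) :
    ((List.range n).map H).reverse.flatten ++ ((List.range n).map c).reverse ≡B
      ((List.range n).map fun i => H i ++ [c i]).reverse.flatten := by
  cases n with
  | zero => exact refl _
  | succ n =>
    simpa [List.range_succ] using (cons_interleave (fun i hi => hH i (by omega))
      (fun i hi => hHc i (by omega)) (fun i j hij hj => hc i j hij (by omega))
      (fun i hi => hc i n hi (by omega))).append_left (H n)

end WordCongr

section Tableau

variable (μ : YoungDiagram) (T : ℕ → ℕ → Fin N)

def colWord (j : ℕ) : List (Fin N) :=
  ((List.range (μ.colLen j)).reverse).map (fun i => T i j)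

/- Diagonal `t` of `diagread` consists of the cells `(i, i + t + 1 - μ.colLen 0)`; the first
conjunct keeps the truncated subtraction from moving cells into column `0`. -/
def truncDiag (m t : ℕ) : List (Fin N) :=
  (List.range (μ.colLen 0)).filterMap fun i =>
    if μ.colLen 0 ≤ i + t + 1 ∧ (i, i + t + 1 - μ.colLen 0) ∈ μ ∧ i + t + 1 - μ.colLen 0 < m then
      some (T i (i + t + 1 - μ.colLen 0))
    else none

def truncDiagread (m : ℕ) : List (Fin N) :=
  (List.range (μ.colLen 0 + μ.rowLen 0 - 1)).flatMap (truncDiag μ T m)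

def truncColword (m : ℕ) : List (Fin N) :=
  (List.range m).flatMap (colWord μ T)

theorem colword_eq_truncColword : colword μ T = truncColword μ T (μ.rowLen 0) := rfl

theorem diagread_eq_truncDiagread : diagread μ T = truncDiagread μ T (μ.rowLen 0) := by
  unfold diagread truncDiagread truncDiag
  simp only [List.bind_eq_flatMap, List.pure_def, List.flatMap_assoc, List.flatMap_singleton]
  refine List.flatMap_congr fun t _ => List.filterMap_congr fun i _ => ?_
  have hj : ((i : ℤ) + ((t : ℤ) - ((μ.colLen 0 : ℤ) - 1))).toNat = i + t + 1 - μ.colLen 0 := by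
    omega
  simp only [hj]
  refine if_congr ⟨fun ⟨h0, hmem⟩ => ⟨by omega, hmem, ?_⟩, fun ⟨h0, hmem, _⟩ => ⟨by omega, hmem⟩⟩
    rfl rfl
  have := YoungDiagram.mem_iff_lt_rowLen.mp hmem
  have := μ.rowLen_anti 0 i (Nat.zero_le i)
  omega

theorem truncDiag_zero (t : ℕ) : truncDiag μ T 0 t = [] :=
  List.filterMap_eq_nil_iff.mpr fun _ _ => if_neg fun h => Nat.not_lt_zero _ h.2.2

theorem truncDiag_eq_nil_of_le {m t : ℕ} (h : μ.colLen 0 + m ≤ t + 1) : truncDiag μ T m t = [] :=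
  List.filterMap_eq_nil_iff.mpr fun _ _ => if_neg fun h' => by omega

theorem truncDiag_succ_of_forall_ne {m t : ℕ} (h : ∀ i, (i, m) ∈ μ → i + t + 1 ≠ μ.colLen 0 + m) :
    truncDiag μ T (m + 1) t = truncDiag μ T m t := by
  refine List.filterMap_congr fun i _ => if_congr ⟨fun ⟨h0, hmem, hlt⟩ => ⟨h0, hmem, ?_⟩,
    fun ⟨h0, hmem, hlt⟩ => ⟨h0, hmem, by omega⟩⟩ rfl rfl
  by_contra hm
  exact h i (by rwa [show i + t + 1 - μ.colLen 0 = m by omega] at hmem) (by omega)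

/-- `μ.colLen 0 + m - 1 - i` is the index of the diagonal through the cell `(i, m)`. -/
theorem truncDiag_add_eq_map_range' {i m e : ℕ} (him : (i, m) ∈ μ) (he : e ≤ 1) :
    truncDiag μ T (m + e) (μ.colLen 0 + m - 1 - i) =
      (List.range' (i - m) (min i m + e)).map fun x => T x (x + m - i) := by
  have hiL : i < μ.colLen 0 :=
    (YoungDiagram.mem_iff_lt_colLen.mp him).trans_le (μ.colLen_anti 0 m (Nat.zero_le m))
  have hcol : ∀ x, x + (μ.colLen 0 + m - 1 - i) + 1 - μ.colLen 0 = x + m - i := fun x => by omega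
  simp only [truncDiag, hcol]
  rw [List.filterMap_range_eq_map_range' _ _ (a := i - m) (b := i + e) (by omega) (by omega)]
  · rw [show i + e - (i - m) = min i m + e by omega]
  · refine fun x _ => ⟨fun ⟨_, _, hlt⟩ => by omega, fun ⟨hx, hxe⟩ => ⟨by omega, ?_, by omega⟩⟩
    exact μ.up_left_mem (by omega) (by omega) him

theorem truncDiag_eq_map_range' {i m : ℕ} (him : (i, m) ∈ μ) :
    truncDiag μ T m (μ.colLen 0 + m - 1 - i) =
      (List.range' (i - m) (min i m)).map fun x => T x (x + m - i) := by
  simpa using truncDiag_add_eq_map_range' μ T (e := 0) him (Nat.zero_le 1)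

theorem truncDiag_succ_of_mem {i m : ℕ} (him : (i, m) ∈ μ) :
    truncDiag μ T (m + 1) (μ.colLen 0 + m - 1 - i) =
      truncDiag μ T m (μ.colLen 0 + m - 1 - i) ++ [T i m] := by
  rw [truncDiag_add_eq_map_range' μ T him le_rfl, truncDiag_eq_map_range' μ T him,
    ← List.range'_append_1, List.map_append]
  congr 1
  simp only [List.range'_succ, List.range'_zero, List.map_cons, List.map_nil]
  congr 2 <;> omega

end Tableau

section Semistandard

variable {μ : YoungDiagram} {T : ℕ → ℕ → Fin N}
  (hrow : ∀ i j : ℕ, (i, j + 1) ∈ μ → T i j ≤ T i (j + 1))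
  (hcol : ∀ i j : ℕ, (i + 1, j) ∈ μ → T i j < T (i + 1) j)

include hrow in
theorem entry_le_of_le {i j j' : ℕ} (hj : j ≤ j') (h : (i, j') ∈ μ) : T i j ≤ T i j' := by
  induction j', hj using Nat.le_induction with
  | base => exact le_rfl
  | succ j' hj ih => exact (ih (μ.up_left_mem le_rfl j'.le_succ h)).trans (hrow i j' h)

include hcol in
theorem entry_lt_of_lt {i i' j : ℕ} (hi : i < i') (h : (i', j) ∈ μ) : T i j < T i' j := by
  induction i', hi using Nat.le_induction with
  | base => exact hcol i j h
  | succ i' hi ih => exact (ih (μ.up_left_mem i'.le_succ le_rfl h)).trans (hcol i' j h)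

include hrow hcol

theorem entry_lt_of_lt_of_le {i i' j j' : ℕ} (hi : i < i') (hj : j ≤ j') (h : (i', j') ∈ μ) :
    T i j < T i' j' :=
  (entry_le_of_le hrow hj (μ.up_left_mem hi.le le_rfl h)).trans_lt (entry_lt_of_lt hcol hi h)

theorem truncDiag_pairwise_lt {i m : ℕ} (him : (i, m) ∈ μ) :
    (truncDiag μ T m (μ.colLen 0 + m - 1 - i)).Pairwise (· < ·) := by
  rw [truncDiag_eq_map_range' μ T him]
  exact List.pairwise_map_range' fun x y _ hxy hy =>
    entry_lt_of_lt_of_le hrow hcol hxy (by omega) (μ.up_left_mem (by omega) (by omega) him)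

theorem lt_of_mem_truncDiag {i m : ℕ} (him : (i, m) ∈ μ) :
    ∀ x ∈ truncDiag μ T m (μ.colLen 0 + m - 1 - i), x < T i m := by
  rw [truncDiag_eq_map_range' μ T him]
  simp only [List.mem_map, List.mem_range'_1]
  rintro _ ⟨x, hx, rfl⟩
  exact entry_lt_of_lt_of_le hrow hcol (by omega) (by omega) him

theorem truncDiagread_append_colWord (m : ℕ) :
    truncDiagread μ T m ++ colWord μ T m ≡B truncDiagread μ T (m + 1) := by
  set L := μ.colLen 0
  set r := μ.colLen m
  have hmem : ∀ i, (i, m) ∈ μ ↔ i < r := fun i => YoungDiagram.mem_iff_lt_colLen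
  rcases Nat.eq_zero_or_pos r with hr | hr
  · have hcolW : colWord μ T m = [] := by simp [colWord, r, hr]
    have hsame : truncDiag μ T (m + 1) = truncDiag μ T m := funext fun t =>
      truncDiag_succ_of_forall_ne μ T fun i hi => by have := (hmem i).mp hi; omega
    rw [hcolW, List.append_nil, truncDiagread, truncDiagread, hsame]
    exact WordCongr.refl _
  have hrL : r ≤ L := μ.colLen_anti 0 m (Nat.zero_le m)
  have hmR : m < μ.rowLen 0 := YoungDiagram.mem_iff_lt_rowLen.mp ((hmem 0).mpr hr)
  have hsplit (m' : ℕ) (hm' : ∀ t, L + m ≤ t → truncDiag μ T m' t = []) :=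
    List.flatMap_range_eq_append_reverse (truncDiag μ T m') (s := L - r + m) (r := r)
      (K := L + μ.rowLen 0 - 1) (by omega) fun t ht => hm' t (by omega)
  rw [show L - r + m + r = L + m by omega] at hsplit
  have hprefix : (List.range (L - r + m)).flatMap (truncDiag μ T (m + 1)) =
      (List.range (L - r + m)).flatMap (truncDiag μ T m) :=
    List.flatMap_congr fun t ht => truncDiag_succ_of_forall_ne μ T fun i hi => by
      have := (hmem i).mp hi; simp at ht; omega
  have hdiag : ((List.range r).map fun i => truncDiag μ T (m + 1) (L + m - 1 - i)) =
      (List.range r).map fun i => truncDiag μ T m (L + m - 1 - i) ++ [T i m] :=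
    List.map_congr_left fun i hi => truncDiag_succ_of_mem μ T ((hmem i).mpr (List.mem_range.mp hi))
  have hinsert := WordCongr.interleave (n := r) (c := fun i => T i m)
    (fun i hi => truncDiag_pairwise_lt hrow hcol ((hmem i).mpr hi))
    (fun i hi => lt_of_mem_truncDiag hrow hcol ((hmem i).mpr hi))
    (fun i j hij hj => entry_lt_of_lt hcol hij ((hmem j).mpr hj))
  rw [truncDiagread, truncDiagread,
    hsplit m fun t ht => truncDiag_eq_nil_of_le μ T (by omega),
    hsplit (m + 1) fun t ht => truncDiag_eq_nil_of_le μ T (by omega), hprefix, hdiag,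
    colWord, List.map_reverse, List.append_assoc]
  exact hinsert.append_left _

theorem truncColword_congr_truncDiagread (m : ℕ) :
    truncColword μ T m ≡B truncDiagread μ T m := by
  induction m with
  | zero =>
    rw [truncDiagread, List.flatMap_eq_nil_iff.mpr fun t _ => truncDiag_zero μ T t]
    exact WordCongr.refl _
  | succ m ih =>
    calc truncColword μ T (m + 1) = truncColword μ T m ++ colWord μ T m := by
          simp [truncColword, List.range_succ]
      _ ≡B truncDiagread μ T m ++ colWord μ T m := ih.append_right _
      _ ≡B truncDiagread μ T (m + 1) := truncDiagread_append_colWord hrow hcol m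

end Semistandard

/-- For any semistandard Young tableau `T` (rows weakly increasing, columns
strictly increasing), `u_{colword(T)} ≡ u_{diagread(T)} (mod I_B)`. -/
theorem stmt15 (N : ℕ) (μ : YoungDiagram) (T : ℕ → ℕ → Fin N)
    (hrow : ∀ i j : ℕ, (i, j + 1) ∈ μ → T i j ≤ T i (j + 1))
    (hcol : ∀ i j : ℕ, (i + 1, j) ∈ μ → T i j < T (i + 1) j) :
    mon (colword μ T) - mon (diagread μ T) ∈ TwoSidedIdeal.span (genB N) := by
  rw [← TwoSidedIdeal.rel_iff, colword_eq_truncColword, diagread_eq_truncDiagread]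
  exact truncColword_congr_truncDiagread hrow hcol _
end
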